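/- arXiv:math/0602327 — 6 statements merged into one kernel-verified Lean document; each statement's English description precedes it below -/
import Mathlib

section
/- Every matrix A ∈ GL₂(ℤ) satisfies exactly one of the following five conditions: (i) A = I₂; (ii) A = −I₂; (iii) A ≠ −I₂ and A does not have 1 as an eigenvalue; (iv) A is conjugate in GL₂(ℤ) to [[1,k],[0,−1]] for some integer k; (v) A is conjugate in GL₂(ℤ) to [[1,k],[0,1]] for some nonzero integer k. -/
open Multiplicative

/-- Conjugacy of integer matrices within `GL₂(ℤ)`: `A` and `B` are conjugate in
`GL₂(ℤ)` iff `P * A = B * P` for some integer matrix `P` invertible over `ℤ`. -/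
def ConjGL2 (A B : Matrix (Fin 2) (Fin 2) ℤ) : Prop :=
  ∃ P : Matrix (Fin 2) (Fin 2) ℤ, IsUnit P.det ∧ P * A = B * P

/-!
The conditions are told apart by the conjugacy invariants `A = 1`, `det A` and `det (A - 1)`
(which is `4` at `A = -1`). For existence, if `det (A - 1) = 0` then `A - 1` kills a primitive
vector `v ∈ ℤ²`, which is the first column of some `Q ∈ SL₂(ℤ)`. Then `Q⁻¹ A Q` fixes `e₀`, so it
is `[[1, k], [0, det A]]`, and for `det A = 1` the corner `k` vanishes only when `A = 1`.
-/

open Matrix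

namespace ConjGL2

variable {A B : Matrix (Fin 2) (Fin 2) ℤ}

lemma det_eq (h : ConjGL2 A B) : A.det = B.det := by
  obtain ⟨P, hP, hPA⟩ := h
  have := congrArg det hPA
  rw [det_mul, det_mul, mul_comm B.det] at this
  exact mul_left_cancel₀ hP.ne_zero this

lemma sub_one (h : ConjGL2 A B) : ConjGL2 (A - 1) (B - 1) := by
  obtain ⟨P, hP, hPA⟩ := h
  exact ⟨P, hP, by rw [Matrix.mul_sub, Matrix.sub_mul, hPA, Matrix.mul_one, Matrix.one_mul]⟩

lemma eq_one_iff (h : ConjGL2 A B) : A = 1 ↔ B = 1 := by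
  obtain ⟨P, hP, hPA⟩ := h
  have hPu : IsUnit P := (isUnit_iff_isUnit_det P).mpr hP
  constructor
  · rintro rfl
    exact hPu.mul_right_cancel (by rw [← hPA, Matrix.mul_one, Matrix.one_mul])
  · rintro rfl
    exact hPu.mul_left_cancel (by rw [hPA, Matrix.mul_one, Matrix.one_mul])

lemma of_isUnit_det {Q : Matrix (Fin 2) (Fin 2) ℤ} (hQ : IsUnit Q.det)
    (A : Matrix (Fin 2) (Fin 2) ℤ) : ConjGL2 A (Q⁻¹ * A * Q) :=
  ⟨Q⁻¹, isUnit_nonsing_inv_det Q hQ, (mul_nonsing_inv_cancel_right _ _ hQ).symm⟩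

lemma det_eq_and_det_sub_one_eq_zero {k e : ℤ} (h : ConjGL2 A !![1, k; 0, e]) :
    A.det = e ∧ (A - 1).det = 0 :=
  ⟨h.det_eq.trans (by simp [det_fin_two_of]), h.sub_one.det_eq.trans (by simp [det_fin_two])⟩

lemma corner_eq_zero_of_eq_one {k e : ℤ} (h : ConjGL2 A !![1, k; 0, e]) (hA : A = 1) : k = 0 := by
  simpa using congrFun (congrFun (h.eq_one_iff.mp hA) 0) 1

end ConjGL2

namespace Matrix

lemma exists_isCoprime_mulVec_eq_zero {M : Matrix (Fin 2) (Fin 2) ℤ} (hM : M.det = 0) :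
    ∃ v : Fin 2 → ℤ, IsCoprime (v 0) (v 1) ∧ M *ᵥ v = 0 := by
  obtain ⟨w, hw0, hMw⟩ := exists_mulVec_eq_zero_iff.mpr hM
  have hgcd : 0 < Int.gcd (w 0) (w 1) := by
    refine Nat.pos_of_ne_zero fun h => hw0 ?_
    rw [Int.gcd_eq_zero_iff] at h
    ext i
    fin_cases i <;> simp [h.1, h.2]
  obtain ⟨g, x, y, hg, hxy, hx, hy⟩ := Int.exists_gcd_one' hgcd
  refine ⟨![x, y], Int.isCoprime_iff_gcd_eq_one.mpr hxy, ?_⟩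
  have hw : w = (g : ℤ) • ![x, y] := by
    ext i
    fin_cases i <;> simp [hx, hy, mul_comm]
  rw [hw, mulVec_smul] at hMw
  exact (smul_eq_zero.mp hMw).resolve_left (by positivity)

lemma exists_det_eq_one_col_zero_eq {v : Fin 2 → ℤ} (hv : IsCoprime (v 0) (v 1)) :
    ∃ Q : Matrix (Fin 2) (Fin 2) ℤ, Q.det = 1 ∧ Q.col 0 = v := by
  obtain ⟨a, b, hab⟩ := hv
  refine ⟨!![v 0, -b; v 1, a], by simp [det_fin_two_of]; linarith, ?_⟩
  ext i
  fin_cases i <;> rfl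

lemma eq_of_col_zero_eq_single {R : Type*} [CommRing R] {B : Matrix (Fin 2) (Fin 2) R}
    (h : B.col 0 = Pi.single 0 1) : B = !![1, B 0 1; 0, B.det] := by
  have h00 : B 0 0 = 1 := congrFun h 0
  have h10 : B 1 0 = 0 := congrFun h 1
  rw [det_fin_two, h00, h10, one_mul, mul_zero, sub_zero]
  conv_lhs => rw [eta_fin_two B, h00, h10]

end Matrix

lemma exists_conjGL2_triangular {A : Matrix (Fin 2) (Fin 2) ℤ} (hA : (A - 1).det = 0) :
    ∃ k, ConjGL2 A !![1, k; 0, A.det] := by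
  obtain ⟨v, hv, hAv⟩ := exists_isCoprime_mulVec_eq_zero hA
  obtain ⟨Q, hQ, hQv⟩ := exists_det_eq_one_col_zero_eq hv
  have hQu : IsUnit Q.det := hQ ▸ isUnit_one
  have hfix : A *ᵥ v = v := by rwa [sub_mulVec, one_mulVec, sub_eq_zero] at hAv
  have hcol : (Q⁻¹ * A * Q).col 0 = Pi.single 0 1 := by
    rw [← mulVec_single_one, ← mulVec_mulVec, mulVec_single_one, hQv, ← mulVec_mulVec, hfix,
      ← hQv, ← mulVec_single_one, mulVec_mulVec, nonsing_inv_mul _ hQu, one_mulVec]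
  have hdet : (Q⁻¹ * A * Q).det = A.det := det_conj' ((isUnit_iff_isUnit_det Q).mpr hQu) A
  refine ⟨(Q⁻¹ * A * Q) 0 1, ?_⟩
  have hconj := ConjGL2.of_isUnit_det hQu A
  rwa [eq_of_col_zero_eq_single hcol, hdet] at hconj

/-- Every matrix in `GL₂(ℤ)` (i.e. every integer matrix invertible over `ℤ`) satisfies
exactly one of the five listed conditions. -/
theorem stmt5 (A : Matrix (Fin 2) (Fin 2) ℤ) (hA : IsUnit A.det) :
    ∃! i : Fin 5,
      ![A = 1,
        A = -1,
        A ≠ -1 ∧ (A - 1).det ≠ 0,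
        ∃ k : ℤ, ConjGL2 A !![1, k; 0, -1],
        ∃ k : ℤ, k ≠ 0 ∧ ConjGL2 A !![1, k; 0, 1]] i := by
  refine existsUnique_of_exists_of_unique ?_ ?_
  · by_cases hA1 : A = 1
    · exact ⟨0, hA1⟩
    by_cases hAn1 : A = -1
    · exact ⟨1, hAn1⟩
    by_cases hfix : (A - 1).det = 0
    swap
    · exact ⟨2, hAn1, hfix⟩
    obtain ⟨k, hk⟩ := exists_conjGL2_triangular hfix
    rcases Int.isUnit_iff.mp hA with hdet | hdet <;> rw [hdet] at hk
    · exact ⟨4, k, fun hk0 => hA1 (hk.eq_one_iff.mpr (by simp [hk0, one_fin_two])), hk⟩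
    · exact ⟨3, k, hk⟩
  · have hone : ((1 : Matrix (Fin 2) (Fin 2) ℤ) - 1).det = 0 := by simp
    have hneg : ((-1 : Matrix (Fin 2) (Fin 2) ℤ) - 1).det = 4 := by simp [det_fin_two]
    have hne : (1 : Matrix (Fin 2) (Fin 2) ℤ) ≠ -1 := fun h => by
      simpa using congrFun (congrFun h 0) 0
    intro i j hi hj
    fin_cases i <;> fin_cases j <;> simp only [Fin.reduceFinMk, cons_val] at hi hj <;>
      grind [det_one, ConjGL2.det_eq_and_det_sub_one_eq_zero,
        ConjGL2.corner_eq_zero_of_eq_one]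
end

section
/- Let F_n be a free group of rank n and φ ∈ Aut(F_n). The mapping torus M_φ = F_n ⋊_φ ℤ has non-trivial centre if and only if φ^k = γ_w for some integer k ≠ 0 and some w ∈ F_n. Moreover, if n ≥ 2 and φ^k = γ_w for some integer k and w ∈ F_n, then wφ = w. -/
open Multiplicative

/-- The mapping torus `M_φ = F_n ⋊_φ ℤ` of an automorphism `φ` of the free group of rank
`n`, presented by `⟨x₁,…,xₙ,t ∣ t⁻¹ xᵢ t = xᵢ φ⟩`; with the conventions of
`SemidirectProduct`, conjugation `t⁻¹ x t` of an element `x` of the fibre `F_n` by the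
stable letter `t = inr (ofAdd 1)` is exactly `φ x`. -/
abbrev MappingTorus {n : ℕ} (φ : MulAut (FreeGroup (Fin n))) :=
  FreeGroup (Fin n) ⋊[zpowersHom (MulAut (FreeGroup (Fin n))) φ⁻¹] Multiplicative ℤ

/-- The stable letter `t` of the mapping torus. -/
def stab {n : ℕ} (φ : MulAut (FreeGroup (Fin n))) : MappingTorus φ :=
  SemidirectProduct.inr (ofAdd 1)

/-- The free fibre `F_n`, regarded as a (normal) subgroup of the mapping torus. -/
def Fsub {n : ℕ} (φ : MulAut (FreeGroup (Fin n))) : Subgroup (MappingTorus φ) :=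
  (SemidirectProduct.inl : FreeGroup (Fin n) →* MappingTorus φ).range

instance Fsub.normal {n : ℕ} (φ : MulAut (FreeGroup (Fin n))) : (Fsub φ).Normal := by
  unfold Fsub
  rw [SemidirectProduct.range_inl_eq_ker_rightHom]
  infer_instance

/-!
An element `(g, tʳ)` of `G ⋊_φ ℤ` is central exactly when `φ g = g` and `φ⁻ʳ` is the conjugation
`x ↦ g⁻¹ x g`. If `G` has trivial centre, a central element with `r = 0` is trivial, and from
`φᵏ = γ_w` one gets `γ_{wφ} = φ γ_w φ⁻¹ = γ_w`, hence `wφ = w`. Free groups of rank at least two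
have trivial centre. In rank at most one the free group is cyclic and torsion-free, so every
automorphism squares to the identity and both sides of the equivalence hold.
-/

namespace FreeGroup

variable {α : Type*}

theorem toWord_of_mul [DecidableEq α] {a : α} {w : FreeGroup α}
    (h : ∀ p ∈ w.toWord.head?, p.1 ≠ a) : (of a * w).toWord = (a, true) :: w.toWord := by
  rw [toWord_mul, toWord_of, List.singleton_append]
  refine IsReduced.reduce_eq ?_
  cases hw : w.toWord with
  | nil => exact IsReduced.singleton
  | cons p L =>
    refine List.isChain_cons_cons.2 ⟨fun hp => absurd hp.symm (h p (by simp [hw])), ?_⟩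
    rw [← hw]
    exact isReduced_toWord

/-- If `a` differs from the first letter of `w ≠ 1`, then `a w` is reduced as written, while the
reduced word of `w a` is a sublist of `w ++ [a]`; equal lengths force the two words to coincide,
but their first letters differ. -/
theorem center_eq_bot [Nontrivial α] : Subgroup.center (FreeGroup α) = ⊥ := by
  classical
  refine (Subgroup.eq_bot_iff_forall _).2 fun w hw => ?_
  by_contra hw1
  obtain ⟨p, L, hL⟩ := List.exists_cons_of_ne_nil (mt toWord_eq_nil_iff.1 hw1)
  obtain ⟨a, ha⟩ := exists_ne p.1
  have hleft : (of a * w).toWord = (a, true) :: w.toWord :=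
    toWord_of_mul fun q hq => by simp_all [eq_comm]
  have hright : (w * of a).toWord.Sublist (w.toWord ++ [(a, true)]) := by
    simpa using toWord_mul_sublist w (of a)
  rw [← Subgroup.mem_center_iff.1 hw, hleft] at hright
  have hwords := hright.eq_of_length (by simp)
  rw [hL] at hwords
  exact ha (congrArg Prod.fst (List.cons.inj hwords).1)

end FreeGroup

namespace MulAut

variable {G : Type*} [Group G]

theorem conj_eq_one_iff {g : G} : conj g = 1 ↔ g ∈ Subgroup.center G := by
  simp only [MulEquiv.ext_iff, conj_apply, one_apply, Subgroup.mem_center_iff]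
  exact forall_congr' fun x => by rw [mul_inv_eq_iff_eq_mul, eq_comm]

theorem mul_conj_mul_inv (φ : MulAut G) (g : G) : φ * conj g * φ⁻¹ = conj (φ g) := by
  ext x
  simp [mul_apply, inv_apply]

theorem conj_injective_of_center_eq_bot (hG : Subgroup.center G = ⊥) :
    Function.Injective (conj : G → MulAut G) := by
  intro a b h
  have : conj (b⁻¹ * a) = 1 := by rw [map_mul, h, map_inv, inv_mul_cancel]
  rw [conj_eq_one_iff, hG, Subgroup.mem_bot, inv_mul_eq_one] at this
  exact this.symm

theorem apply_eq_of_zpow_eq_conj (hG : Subgroup.center G = ⊥) {φ : MulAut G} {k : ℤ} {w : G}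
    (h : φ ^ k = conj w⁻¹) : φ w = w := by
  have : conj (φ w⁻¹) = conj w⁻¹ := by
    rw [← mul_conj_mul_inv, ← h, ((Commute.refl φ).zpow_right k).eq, mul_inv_cancel_right]
  simpa using conj_injective_of_center_eq_bot hG this

theorem sq_eq_one_of_isCyclic [IsCyclic G] [IsMulTorsionFree G] (φ : MulAut G) : φ ^ 2 = 1 := by
  obtain ⟨m, hm⟩ := φ.toMonoidHom.map_cyclic
  obtain ⟨m', hm'⟩ := (φ⁻¹).toMonoidHom.map_cyclic
  simp only [MulEquiv.coe_toMonoidHom] at hm hm'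
  ext g
  rcases eq_or_ne g 1 with rfl | hg
  · simp
  have hmm' : m * m' = 1 := by
    have : g ^ (m * m' - 1) = 1 := by
      rw [zpow_sub_one, mul_inv_eq_one, zpow_mul, ← hm, ← hm']
      exact φ.symm_apply_apply g
    simpa [sub_eq_zero] using (IsMulTorsionFree.zpow_eq_one_iff_right hg).1 this
  have hm2 : m * m = 1 := by
    rcases Int.eq_one_or_neg_one_of_mul_eq_one hmm' with rfl | rfl <;> rfl
  rw [sq, mul_apply, one_apply, hm, hm, ← zpow_mul, hm2, zpow_one]

end MulAut

namespace SemidirectProduct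

variable {N H : Type*} [Group N] [Group H] {ψ : H →* MulAut N}

theorem mem_center_iff {x : N ⋊[ψ] H} :
    x ∈ Subgroup.center (N ⋊[ψ] H) ↔
      (∀ h, ψ h x.left = x.left) ∧ ψ x.right = MulAut.conj x.left⁻¹ ∧
        x.right ∈ Subgroup.center H := by
  simp only [Subgroup.mem_center_iff]
  constructor
  · intro hx
    refine ⟨fun h => ?_, MulEquiv.ext fun b => ?_, fun h => ?_⟩
    · simpa using congrArg left (hx (inr h))
    · have := congrArg left (hx (inl b))
      simp only [mul_left, left_inl, right_inl, map_one, MulAut.one_apply] at this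
      rw [MulAut.conj_apply, inv_inv, mul_assoc, this, inv_mul_cancel_left]
    · simpa using congrArg right (hx (inr h))
  · rintro ⟨hfix, hconj, hcomm⟩ g
    ext
    · simp [hfix, hconj, mul_assoc]
    · simpa using hcomm g.right

end SemidirectProduct

section MappingTorus

variable {G : Type*} [Group G] (φ : MulAut G)

theorem mem_center_mappingTorus_iff {x : G ⋊[zpowersHom (MulAut G) φ⁻¹] Multiplicative ℤ} :
    x ∈ Subgroup.center (G ⋊[zpowersHom (MulAut G) φ⁻¹] Multiplicative ℤ) ↔
      φ x.left = x.left ∧ φ ^ (-toAdd x.right) = MulAut.conj x.left⁻¹ := by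
  have hfix : (∀ j : ℤ, (φ⁻¹ ^ j) x.left = x.left) ↔ φ x.left = x.left := by
    refine ⟨fun h => by simpa using h (-1), fun h j => ?_⟩
    have : x.left ∈ MulAction.fixedBy G φ⁻¹ := by
      rw [MulAction.mem_fixedBy, inv_smul_eq_iff, MulAut.smul_def, h]
    exact MulAction.mem_fixedBy_zpow this j
  rw [SemidirectProduct.mem_center_iff, zpowersHom_apply, inv_zpow', ← hfix,
    ← toAdd.forall_congr_right]
  simp [Subgroup.mem_center_iff, mul_comm]

theorem center_mappingTorus_ne_bot {k : ℤ} (hk : k ≠ 0) {w : G} (hfix : φ w = w)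
    (h : φ ^ k = MulAut.conj w⁻¹) :
    Subgroup.center (G ⋊[zpowersHom (MulAut G) φ⁻¹] Multiplicative ℤ) ≠ ⊥ := by
  set z : G ⋊[zpowersHom (MulAut G) φ⁻¹] Multiplicative ℤ := ⟨w, ofAdd (-k)⟩
  have hz : z ∈ Subgroup.center _ := (mem_center_mappingTorus_iff φ).2 ⟨hfix, by simpa [z] using h⟩
  intro hbot
  rw [hbot, Subgroup.mem_bot] at hz
  exact hk (by simpa [z] using congrArg (toAdd ∘ SemidirectProduct.right) hz)

theorem exists_zpow_eq_conj_of_center_mappingTorus_ne_bot (hG : Subgroup.center G = ⊥)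
    (h : Subgroup.center (G ⋊[zpowersHom (MulAut G) φ⁻¹] Multiplicative ℤ) ≠ ⊥) :
    ∃ k : ℤ, k ≠ 0 ∧ ∃ w : G, φ ^ k = MulAut.conj w⁻¹ := by
  obtain ⟨z, hz, hz1⟩ :=
    (Subgroup.nontrivial_iff_exists_ne_one _).1 ((Subgroup.nontrivial_iff_ne_bot _).2 h)
  obtain ⟨-, hconj⟩ := (mem_center_mappingTorus_iff φ).1 hz
  refine ⟨-toAdd z.right, fun hk => hz1 ?_, z.left, hconj⟩
  rw [hk, zpow_zero, eq_comm, MulAut.conj_eq_one_iff, hG, Subgroup.mem_bot, inv_eq_one] at hconj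
  exact SemidirectProduct.ext hconj (toAdd_eq_zero.1 (neg_eq_zero.1 hk))

end MappingTorus

/-- `M_φ` has non-trivial centre iff `φ^k = γ_w` (conjugation `x ↦ w⁻¹ x w`) for some
`k ≠ 0` and `w ∈ F_n`; moreover if `n ≥ 2` and `φ^k = γ_w` then `w φ = w`. -/
theorem stmt8 (n : ℕ) (φ : MulAut (FreeGroup (Fin n))) :
    (Subgroup.center (MappingTorus φ) ≠ ⊥ ↔
      ∃ k : ℤ, k ≠ 0 ∧ ∃ w : FreeGroup (Fin n), φ ^ k = MulAut.conj w⁻¹) ∧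
    (2 ≤ n → ∀ (k : ℤ) (w : FreeGroup (Fin n)), φ ^ k = MulAut.conj w⁻¹ → φ w = w) := by
  have hcenter (hn : 2 ≤ n) : Subgroup.center (FreeGroup (Fin n)) = ⊥ :=
    have := Fin.nontrivial_iff_two_le.2 hn
    FreeGroup.center_eq_bot
  refine ⟨?_, fun hn _ _ => MulAut.apply_eq_of_zpow_eq_conj (hcenter hn)⟩
  rcases le_or_gt 2 n with hn | hn
  · exact ⟨exists_zpow_eq_conj_of_center_mappingTorus_ne_bot φ (hcenter hn),
      fun ⟨k, hk, w, h⟩ =>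
        center_mappingTorus_ne_bot φ hk (MulAut.apply_eq_of_zpow_eq_conj (hcenter hn) h) h⟩
  · have : IsCyclic (FreeGroup (Fin n)) := by interval_cases n <;> infer_instance
    have h2 : φ ^ (2 : ℤ) = MulAut.conj 1⁻¹ := by
      simpa using MulAut.sq_eq_one_of_isCyclic φ
    exact iff_of_true (center_mappingTorus_ne_bot φ two_ne_zero (map_one φ) h2)
      ⟨2, two_ne_zero, 1, h2⟩
end

section
/- Let F_n be a free group of rank n, φ ∈ Aut(F_n), and M_φ = F_n ⋊_φ ℤ. The matrix φ^ab induced by φ on the abelianization ℤⁿ of F_n does not have 1 as an eigenvalue (i.e., there is no nonzero u ∈ ℤⁿ with u·φ^ab = u) if and only if F_n is the unique normal subgroup of M_φ whose quotient group is isomorphic to ℤ. -/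
open Multiplicative

/-- The total exponent sum of the generator `x_j` in a word of the free group. -/
def expSum {n : ℕ} (j : Fin n) : FreeGroup (Fin n) →* Multiplicative ℤ :=
  FreeGroup.lift fun i => ofAdd (if i = j then (1 : ℤ) else 0)

/-- The matrix `φ^ab` induced by an automorphism `φ` of `F_n` on the abelianisation
`ℤⁿ`, written in row form: the `(i,j)` entry is the exponent sum of `x_j` in `φ xᵢ`. -/
def abMatrix {n : ℕ} (φ : MulAut (FreeGroup (Fin n))) : Matrix (Fin n) (Fin n) ℤ :=
  Matrix.of fun i j => toAdd (expSum j (φ (FreeGroup.of i)))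

/-
If `1` is not an eigenvalue of `φ^ab`, every homomorphism `M_φ → ℤ` kills the fibre, since its
restriction to `F_n` is a `φ`-invariant class in `Hom(F_n, ℤ) ≅ ℤⁿ`, i.e. a fixed column vector
of `φ^ab`; so an epimorphism `M_φ → ℤ` factors through `M_φ / F_n ≅ ℤ` by a surjective, hence
injective, endomorphism of `ℤ`, and its kernel is `F_n`. Conversely a nonzero fixed vector `v`
gives a `φ`-invariant `ψ : F_n → ℤ`, which extends, sending `t` to a generator, to an
epimorphism `M_φ → ℤ` whose kernel does not contain `F_n`. Row and column fixed vectors exist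
together since both say `det (φ^ab - 1) = 0`.
-/

open Function SemidirectProduct
open scoped Matrix

namespace Matrix

variable {ι R : Type*} [Fintype ι] [DecidableEq ι] [CommRing R] [IsDomain R]

theorem forall_mulVec_eq_self_imp_eq_zero_iff (A : Matrix ι ι R) :
    (∀ v, A *ᵥ v = v → v = 0) ↔ (A - 1).det ≠ 0 := by
  simp only [ne_eq, ← exists_mulVec_eq_zero_iff, sub_mulVec, one_mulVec, sub_eq_zero]
  grind

theorem forall_vecMul_eq_self_imp_eq_zero_iff (A : Matrix ι ι R) :
    (∀ u, u ᵥ* A = u → u = 0) ↔ ∀ v, A *ᵥ v = v → v = 0 := by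
  simp only [← mulVec_transpose]
  rw [forall_mulVec_eq_self_imp_eq_zero_iff, forall_mulVec_eq_self_imp_eq_zero_iff,
    ← det_transpose (A - 1), transpose_sub, transpose_one]

end Matrix

theorem MonoidHom.injective_of_surjective_int {k : Multiplicative ℤ →* Multiplicative ℤ}
    (hk : Surjective k) : Injective k :=
  OrzechProperty.injective_of_surjective_endomorphism k.toAdditive.toIntLinearMap hk

theorem MonoidHom.ker_eq_of_ker_le_of_surjective_int {G : Type*} [Group G]
    {f g : G →* Multiplicative ℤ} (hf : Surjective f) (hg : Surjective g) (h : f.ker ≤ g.ker) :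
    g.ker = f.ker := by
  set k := (QuotientGroup.lift _ g h).comp
    (QuotientGroup.quotientKerEquivOfSurjective f hf).symm.toMonoidHom
  have hgk : g = k.comp f := by
    ext x
    have hx : (QuotientGroup.quotientKerEquivOfSurjective f hf).symm (f x) = x :=
      (MulEquiv.symm_apply_eq _).2 rfl
    simp [k, hx]
  rw [hgk] at hg ⊢
  exact ker_comp_of_injective f k (injective_of_surjective_int (hg.of_comp (g := f)))

section FreeGroup

variable {n : ℕ}

theorem toAdd_apply_eq_sum_expSum (ψ : FreeGroup (Fin n) →* Multiplicative ℤ)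
    (w : FreeGroup (Fin n)) :
    toAdd (ψ w) = ∑ j, toAdd (expSum j w) * toAdd (ψ (FreeGroup.of j)) := by
  induction w using FreeGroup.induction_on with
  | C1 => simp
  | of i => simp [expSum]
  | inv_of i ih => simp [ih]
  | mul x y hx hy => simp [hx, hy, add_mul, Finset.sum_add_distrib]

theorem abMatrix_mulVec (φ : MulAut (FreeGroup (Fin n)))
    (ψ : FreeGroup (Fin n) →* Multiplicative ℤ) :
    abMatrix φ *ᵥ (fun j => toAdd (ψ (FreeGroup.of j))) =
      fun i => toAdd (ψ (φ (FreeGroup.of i))) := by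
  funext i
  rw [toAdd_apply_eq_sum_expSum ψ]
  rfl

theorem forall_map_apply_eq_iff_abMatrix_mulVec (φ : MulAut (FreeGroup (Fin n)))
    (ψ : FreeGroup (Fin n) →* Multiplicative ℤ) :
    (∀ x, ψ (φ x) = ψ x) ↔
      abMatrix φ *ᵥ (fun j => toAdd (ψ (FreeGroup.of j))) =
        fun j => toAdd (ψ (FreeGroup.of j)) := by
  rw [abMatrix_mulVec]
  refine ⟨fun h => funext fun i => by rw [h], fun h => ?_⟩
  have hcomp : ψ.comp φ.toMonoidHom = ψ :=
    FreeGroup.ext_hom _ _ fun i => toAdd.injective (congrFun h i)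
  exact DFunLike.congr_fun hcomp

end FreeGroup

theorem MulAut.map_zpow_apply {G H : Type*} [Group G] [Group H] (ψ : G →* H) {φ : MulAut G}
    (h : ∀ x, ψ (φ x) = ψ x) (m : ℤ) (x : G) : ψ ((φ ^ m) x) = ψ x := by
  induction m using Int.induction_on generalizing x with
  | zero => rfl
  | succ m ih => rw [zpow_add_one, mul_apply, ih, h]
  | pred m ih => rw [zpow_sub_one, mul_apply, ih, ← h, apply_inv_self]

theorem SemidirectProduct.map_inl_aut {N G H : Type*} [Group N] [Group G] [CommGroup H]
    {θ : G →* MulAut N} (f : N ⋊[θ] G →* H) (g : G) (x : N) :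
    f (inl (θ g x)) = f (inl x) := by
  rw [inl_aut]
  simp

namespace MappingTorus

variable {n : ℕ} (φ : MulAut (FreeGroup (Fin n)))

theorem map_inl_apply {H : Type*} [CommGroup H] (f : MappingTorus φ →* H)
    (x : FreeGroup (Fin n)) : f (inl (φ x)) = f (inl x) := by
  simpa using map_inl_aut f (ofAdd (-1)) x

theorem Fsub_eq_ker_rightHom : Fsub φ = (rightHom : MappingTorus φ →* Multiplicative ℤ).ker :=
  range_inl_eq_ker_rightHom

theorem Fsub_le_ker (hfix : ∀ v, abMatrix φ *ᵥ v = v → v = 0)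
    (f : MappingTorus φ →* Multiplicative ℤ) : Fsub φ ≤ f.ker := by
  set ψ := f.comp inl
  have hψ : ψ = 1 := by
    have hv := hfix _ ((forall_map_apply_eq_iff_abMatrix_mulVec φ ψ).1 (map_inl_apply φ f))
    exact FreeGroup.ext_hom _ _ fun i => toAdd.injective (congrFun hv i)
  rintro _ ⟨x, rfl⟩
  exact DFunLike.congr_fun hψ x

theorem exists_surjective_comp_inl_eq (ψ : FreeGroup (Fin n) →* Multiplicative ℤ)
    (hψ : ∀ x, ψ (φ x) = ψ x) :
    ∃ f : MappingTorus φ →* Multiplicative ℤ, Surjective f ∧ f.comp inl = ψ := by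
  refine ⟨lift ψ (MonoidHom.id _) fun g => ?_, fun y => ⟨inr y, by simp⟩, lift_comp_inl ..⟩
  ext x
  simp only [MonoidHom.comp_apply, MulEquiv.coe_toMonoidHom, zpowersHom_apply, inv_zpow',
    MulAut.map_zpow_apply ψ hψ, MonoidHom.id_apply, MulAut.conj_apply, mul_inv_cancel_comm]

theorem eq_Fsub_of_quotient_mulEquiv (hfix : ∀ v, abMatrix φ *ᵥ v = v → v = 0)
    (N : Subgroup (MappingTorus φ)) [N.Normal] (e : (MappingTorus φ ⧸ N) ≃* Multiplicative ℤ) :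
    N = Fsub φ := by
  set f := e.toMonoidHom.comp (QuotientGroup.mk' N)
  have hf : Surjective f := e.surjective.comp (QuotientGroup.mk'_surjective N)
  have hker : f.ker = N := by
    rw [MonoidHom.ker_comp_of_injective _ _ e.injective, QuotientGroup.ker_mk']
  have hle := Fsub_le_ker φ hfix f
  rw [Fsub_eq_ker_rightHom] at hle ⊢
  rw [← hker, MonoidHom.ker_eq_of_ker_le_of_surjective_int rightHom_surjective hf hle]

end MappingTorus

/-- `φ^ab` does not have `1` as an eigenvalue iff the fibre `F_n` is the unique normal
subgroup of `M_φ` whose quotient group is isomorphic to `ℤ`. -/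
theorem stmt12 (n : ℕ) (φ : MulAut (FreeGroup (Fin n))) :
    (∀ u : Fin n → ℤ, Matrix.vecMul u (abMatrix φ) = u → u = 0) ↔
    (Nonempty ((MappingTorus φ ⧸ Fsub φ) ≃* Multiplicative ℤ) ∧
      ∀ (N : Subgroup (MappingTorus φ)) [N.Normal],
        Nonempty ((MappingTorus φ ⧸ N) ≃* Multiplicative ℤ) → N = Fsub φ) := by
  rw [Matrix.forall_vecMul_eq_self_imp_eq_zero_iff]
  constructor
  · intro hfix
    exact ⟨⟨(QuotientGroup.quotientMulEquivOfEq (MappingTorus.Fsub_eq_ker_rightHom φ)).trans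
      (QuotientGroup.quotientKerEquivOfSurjective _ rightHom_surjective)⟩,
      fun N _ ⟨e⟩ => MappingTorus.eq_Fsub_of_quotient_mulEquiv φ hfix N e⟩
  · rintro ⟨-, huniq⟩ v hv
    obtain ⟨f, hf, hfψ⟩ := MappingTorus.exists_surjective_comp_inl_eq φ
      (FreeGroup.lift (ofAdd ∘ v))
      ((forall_map_apply_eq_iff_abMatrix_mulVec φ _).2 (by simpa using hv))
    have hker : f.ker = Fsub φ :=
      huniq f.ker ⟨QuotientGroup.quotientKerEquivOfSurjective f hf⟩
    funext i
    have hi : inl (FreeGroup.of i) ∈ f.ker := hker ▸ ⟨FreeGroup.of i, rfl⟩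
    simpa [← MonoidHom.comp_apply, hfψ] using hi
end

section
/- In GL₂(ℤ): (a) the centre of GL₂(ℤ) consists precisely of the matrices I₂ and −I₂; (b) for every non-central element A ∈ GL₂(ℤ), the cyclic subgroup ⟨A⟩ generated by A has finite index in the centraliser of A in GL₂(ℤ). -/
/-!
The centre of `GL n R` is the image of `Rˣ`, and `ℤˣ = {±1}`.

For non-scalar `A`, one fixed `D ≠ 0` gives `D • B = x • 1 + y • A` for every `B` commuting with
`A`; so the centraliser embeds in `ℤ²`, its multiplication is that of `ℤ[A]`, and
`x² + tr A · x y + det A · y² = ± D²`. If `A` is elliptic this form is definite and the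
centraliser is finite. Otherwise a real root `μ` of the characteristic polynomial of `A` gives the
eigenvalue `φ(B) = (x + y μ) / D` of `B` on the `μ`-eigenline, which is multiplicative. For
hyperbolic `A`, `log |φ|` is a homomorphism to `ℝ` with finite sublevel sets, nonzero at `A`
unless `μ = ±1`, in which case the centraliser is finite. For parabolic `A`, `φ = ±1` and
`y / (D φ)` plays the same role. A homomorphism to `ℝ` with finite sublevel sets that does not
vanish at `A` makes `⟨A⟩` of finite index.
-/

open Matrix Subgroup

theorem Subgroup.mem_centralizer_singleton_self {G : Type*} [Group G] (g : G) :
    g ∈ centralizer {g} :=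
  mem_centralizer_singleton_iff.mpr rfl

theorem Subgroup.subgroupOf_zpowers {G : Type*} [Group G] {H : Subgroup G} (a : H) :
    (zpowers (a : G)).subgroupOf H = zpowers a := by
  rw [subgroupOf, ← H.coe_subtype, ← MonoidHom.map_zpowers,
    comap_map_eq_self_of_injective H.subtype_injective]

theorem Subgroup.finiteIndex_zpowers_of_additive {G : Type*} [Group G] (f : G → ℝ)
    (hf : ∀ a b, f (a * b) = f a + f b) (hfin : ∀ M, {a | |f a| ≤ M}.Finite)
    {g : G} (hg : f g ≠ 0) : (zpowers g).FiniteIndex := by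
  let F : G →* Multiplicative ℝ := MonoidHom.mk' (fun a ↦ .ofAdd (f a)) hf
  have hpow (k : ℤ) : f (g ^ k) = k * f g := by
    change (F (g ^ k)).toAdd = _
    rw [map_zpow, toAdd_zpow, zsmul_eq_mul]
    rfl
  have := (hfin |f g|).to_subtype
  have : Finite (G ⧸ zpowers g) := by
    refine Finite.of_surjective (fun a : {a | |f a| ≤ |f g|} ↦ (a : G ⧸ zpowers g)) ?_
    rintro ⟨a⟩
    set k := ⌊f a / f g⌋
    have hk : |f a / f g - k| ≤ 1 := abs_le.mpr
      ⟨by linarith [Int.floor_le (f a / f g)], by linarith [Int.lt_floor_add_one (f a / f g)]⟩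
    refine ⟨⟨a * g ^ (-k), ?_⟩, QuotientGroup.mk_mul_of_mem _ (zpow_mem (mem_zpowers g) _)⟩
    calc |f (a * g ^ (-k))| = |f a / f g - k| * |f g| := by
          rw [hf, hpow, ← abs_mul, sub_mul, div_mul_cancel₀ _ hg]; push_cast; ring_nf
      _ ≤ |f g| := mul_le_of_le_one_left (abs_nonneg _) hk
  exact finiteIndex_of_finite_quotient

theorem Real.exists_ne_add_eq_mul_eq {b c : ℝ} (h : 0 < b ^ 2 - 4 * c) :
    ∃ μ μ' : ℝ, μ ≠ μ' ∧ μ + μ' = b ∧ μ * μ' = c := by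
  have hs := Real.sq_sqrt h.le
  refine ⟨(b + √(b ^ 2 - 4 * c)) / 2, (b - √(b ^ 2 - 4 * c)) / 2, ?_, by ring,
    by linear_combination (-1 / 4 : ℝ) * hs⟩
  linarith [Real.sqrt_pos.mpr h]

theorem Int.abs_le_of_definite_form_le {t d x y k : ℤ} (hΔ : t ^ 2 - 4 * d < 0)
    (h : x ^ 2 + t * x * y + d * y ^ 2 ≤ k ^ 2) : |x| ≤ (1 + |t|) * |k| ∧ |y| ≤ 2 * |k| := by
  have hid : (2 * x + t * y) ^ 2 + (4 * d - t ^ 2) * y ^ 2 =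
      4 * (x ^ 2 + t * x * y + d * y ^ 2) := by
    ring
  have hy : |y| ≤ 2 * |k| := by
    have : y ^ 2 ≤ (2 * k) ^ 2 := by nlinarith [sq_nonneg (2 * x + t * y)]
    simpa [abs_mul] using sq_le_sq.mp this
  have hxy : |2 * x + t * y| ≤ 2 * |k| := by
    have : (2 * x + t * y) ^ 2 ≤ (2 * k) ^ 2 := by nlinarith [sq_nonneg y]
    simpa [abs_mul] using sq_le_sq.mp this
  refine ⟨?_, hy⟩
  have h2x : 2 * |x| ≤ 2 * |k| + |t| * (2 * |k|) :=
    calc 2 * |x| = |(2 * x + t * y) - t * y| := by rw [add_sub_cancel_right, abs_mul]; norm_num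
      _ ≤ |2 * x + t * y| + |t| * |y| := by rw [← abs_mul]; exact abs_sub _ _
      _ ≤ 2 * |k| + |t| * (2 * |k|) := by gcongr
  linarith

namespace Matrix

variable {R : Type*} [CommRing R]

theorem sq_eq_trace_smul_sub_det_smul_fin_two (A : Matrix (Fin 2) (Fin 2) R) :
    A ^ 2 = A.trace • A - A.det • 1 := by
  ext i j
  fin_cases i <;> fin_cases j <;>
    simp only [Fin.zero_eta, Fin.mk_one, sq, mul_apply, Fin.sum_univ_two, trace_fin_two,
      det_fin_two, sub_apply, smul_apply, smul_eq_mul, one_apply_eq, one_apply_ne zero_ne_one,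
      one_apply_ne one_ne_zero] <;>
    ring

theorem det_smul_one_add_smul_fin_two (A : Matrix (Fin 2) (Fin 2) R) (x y : R) :
    (x • 1 + y • A).det = x ^ 2 + A.trace * x * y + A.det * y ^ 2 := by
  simp only [det_fin_two, trace_fin_two, add_apply, smul_apply, one_apply_eq,
    one_apply_ne zero_ne_one, one_apply_ne one_ne_zero, smul_eq_mul]
  ring

theorem notMem_range_scalar_of_discr_ne_zero {A : Matrix (Fin 2) (Fin 2) R} (hA : A.discr ≠ 0) :
    A ∉ Set.range (scalar (Fin 2)) := by
  rintro ⟨r, rfl⟩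
  apply hA
  rw [discr_fin_two, trace_fin_two, det_fin_two]
  simp only [scalar_apply, diagonal_apply_eq, diagonal_apply_ne _ zero_ne_one,
    diagonal_apply_ne _ one_ne_zero]
  ring

theorem ne_zero_or_of_notMem_range_scalar_fin_two {A : Matrix (Fin 2) (Fin 2) R}
    (hA : A ∉ Set.range (scalar (Fin 2))) : A 0 1 ≠ 0 ∨ A 1 0 ≠ 0 ∨ A 0 0 - A 1 1 ≠ 0 := by
  contrapose! hA
  refine ⟨A 0 0, ?_⟩
  ext i j
  fin_cases i <;> fin_cases j <;> simp [hA.1, hA.2.1, sub_eq_zero.mp hA.2.2]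

theorem smul_eq_of_commute_fin_two {A B : Matrix (Fin 2) (Fin 2) R} (h : Commute A B) :
    A 0 1 • B = (A 0 1 * B 0 0 - B 0 1 * A 0 0) • 1 + B 0 1 • A ∧
    A 1 0 • B = (A 1 0 * B 0 0 - B 1 0 * A 0 0) • 1 + B 1 0 • A ∧
    (A 0 0 - A 1 1) • B = (A 0 0 * B 1 1 - A 1 1 * B 0 0) • 1 + (B 0 0 - B 1 1) • A := by
  have e (i j : Fin 2) := congrFun (congrFun h.eq i) j
  simp only [mul_apply, Fin.sum_univ_two] at e
  refine ⟨?_, ?_, ?_⟩ <;> ext i j <;> fin_cases i <;> fin_cases j <;>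
    simp only [Fin.zero_eta, Fin.mk_one, add_apply, smul_apply, smul_eq_mul, one_apply_eq,
      one_apply_ne zero_ne_one, one_apply_ne one_ne_zero] <;>
    grind

theorem smul_one_add_smul_inj_fin_two [IsDomain R] {A : Matrix (Fin 2) (Fin 2) R}
    (hA : A ∉ Set.range (scalar (Fin 2))) {x y x' y' : R} :
    x • 1 + y • A = x' • 1 + y' • A ↔ x = x' ∧ y = y' := by
  refine ⟨fun h ↦ ?_, by rintro ⟨rfl, rfl⟩; rfl⟩
  have e (i j : Fin 2) := congrFun (congrFun h i) j
  have e00 : x + y * A 0 0 = x' + y' * A 0 0 := by simpa using e 0 0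
  have e01 : y * A 0 1 = y' * A 0 1 := by simpa using e 0 1
  have e10 : y * A 1 0 = y' * A 1 0 := by simpa using e 1 0
  have e11 : x + y * A 1 1 = x' + y' * A 1 1 := by simpa using e 1 1
  have hy : y = y' := by
    by_contra hy
    rcases ne_zero_or_of_notMem_range_scalar_fin_two hA with h | h | h <;>
      apply mul_ne_zero (sub_ne_zero.mpr hy) h
    · linear_combination e01
    · linear_combination e10
    · linear_combination e00 - e11
  exact ⟨by linear_combination e00 - A 0 0 * hy, hy⟩

structure CentralizerCoords (A : Matrix (Fin 2) (Fin 2) R) where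
  den : R
  den_ne_zero : den ≠ 0
  x : Matrix (Fin 2) (Fin 2) R → R
  y : Matrix (Fin 2) (Fin 2) R → R
  den_smul : ∀ B, Commute A B → den • B = x B • 1 + y B • A

theorem nonempty_centralizerCoords {A : Matrix (Fin 2) (Fin 2) R}
    (hA : A ∉ Set.range (scalar (Fin 2))) : Nonempty (CentralizerCoords A) := by
  rcases ne_zero_or_of_notMem_range_scalar_fin_two hA with h | h | h
  · exact ⟨⟨_, h, _, _, fun _ hB ↦ (smul_eq_of_commute_fin_two hB).1⟩⟩
  · exact ⟨⟨_, h, _, _, fun _ hB ↦ (smul_eq_of_commute_fin_two hB).2.1⟩⟩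
  · exact ⟨⟨_, h, _, _, fun _ hB ↦ (smul_eq_of_commute_fin_two hB).2.2⟩⟩

namespace CentralizerCoords

variable {A B B' : Matrix (Fin 2) (Fin 2) R} (K : CentralizerCoords A)

theorem norm_coords_eq_den_sq_mul_det (hB : Commute A B) :
    K.x B ^ 2 + A.trace * K.x B * K.y B + A.det * K.y B ^ 2 = K.den ^ 2 * B.det := by
  rw [← det_smul_one_add_smul_fin_two, ← K.den_smul B hB, det_smul, Fintype.card_fin]

variable [IsDomain R]

theorem coords_self (hA : A ∉ Set.range (scalar (Fin 2))) : K.x A = 0 ∧ K.y A = K.den := by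
  rw [← smul_one_add_smul_inj_fin_two hA, ← K.den_smul A (Commute.refl A), zero_smul, zero_add]

theorem den_mul_coords_mul (hA : A ∉ Set.range (scalar (Fin 2))) (hB : Commute A B)
    (hB' : Commute A B') :
    K.den * K.x (B * B') = K.x B * K.x B' - A.det * (K.y B * K.y B') ∧
    K.den * K.y (B * B') = K.x B * K.y B' + K.x B' * K.y B + A.trace * (K.y B * K.y B') := by
  rw [← smul_one_add_smul_inj_fin_two hA]
  calc (K.den * K.x (B * B')) • 1 + (K.den * K.y (B * B')) • A
      = (K.den • B) * (K.den • B') := by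
        rw [smul_mul_smul_comm, mul_smul K.den K.den, K.den_smul _ (hB.mul_right hB'), smul_add,
          smul_smul, smul_smul]
    _ = _ := by
        rw [K.den_smul B hB, K.den_smul B' hB']
        simp only [add_mul, mul_add, smul_mul_smul_comm, one_mul, mul_one, ← sq, one_pow,
          sq_eq_trace_smul_sub_det_smul_fin_two A]
        module

theorem injOn : Set.InjOn (fun B ↦ (K.x B, K.y B)) {B | Commute A B} := by
  intro B hB B' hB' h
  simp only [Prod.mk.injEq] at h
  apply smul_right_injective _ K.den_ne_zero
  simp only [K.den_smul B hB, K.den_smul B' hB', h]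

end CentralizerCoords

namespace GeneralLinearGroup

variable {n : Type*} [Fintype n] [DecidableEq n]

theorem commute_val_of_mem_centralizer {A B : GL n R} (hB : B ∈ centralizer {A}) :
    Commute A.val B.val :=
  congrArg Units.val (mem_centralizer_singleton_iff.mp hB).symm

theorem val_det_eq_one_or_neg_one (B : GL n ℤ) : B.val.det = 1 ∨ B.val.det = -1 := by
  rcases Int.units_eq_one_or B.det with h | h <;> simp [← val_det_apply, h]

theorem mem_center_iff_eq_one_or_eq_neg_one {A : GL n ℤ} :
    A ∈ center (GL n ℤ) ↔ A = 1 ∨ A = -1 := by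
  rw [center_eq_range_scalar]
  constructor
  · rintro ⟨u, rfl⟩
    rcases Int.units_eq_one_or u with rfl | rfl
    exacts [.inl (map_one _), .inr (Units.ext (by simp))]
  · rintro (rfl | rfl)
    exacts [⟨1, map_one _⟩, ⟨-1, Units.ext (by simp)⟩]

end GeneralLinearGroup

namespace CentralizerCoords

section Eigenvalue

variable {A B B' : Matrix (Fin 2) (Fin 2) ℤ} (K : CentralizerCoords A) {μ μ' : ℝ}

/-- The eigenvalue of `B` on the `μ`-eigenline of `A`, for `μ` a real root of the characteristic
polynomial of `A`: there `den • B = x • 1 + y • A` acts as `x + y μ`. -/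
noncomputable def eigenvalue (μ : ℝ) (B : Matrix (Fin 2) (Fin 2) ℤ) : ℝ :=
  (K.x B + K.y B * μ) / K.den

theorem den_mul_eigenvalue : K.den * K.eigenvalue μ B = K.x B + K.y B * μ :=
  mul_div_cancel₀ _ (Int.cast_ne_zero.mpr K.den_ne_zero)

theorem eigenvalue_self (hA : A ∉ Set.range (scalar (Fin 2))) : K.eigenvalue μ A = μ := by
  have hD : (K.den : ℝ) ≠ 0 := Int.cast_ne_zero.mpr K.den_ne_zero
  rw [eigenvalue, (K.coords_self hA).1, (K.coords_self hA).2]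
  simp [hD]

theorem eigenvalue_mul_eigenvalue (hsum : μ + μ' = A.trace) (hprod : μ * μ' = A.det)
    (hB : Commute A B) : K.eigenvalue μ B * K.eigenvalue μ' B = B.det := by
  have hD : (K.den : ℝ) ≠ 0 := Int.cast_ne_zero.mpr K.den_ne_zero
  have h : (K.x B : ℝ) ^ 2 + A.trace * K.x B * K.y B + A.det * K.y B ^ 2 = K.den ^ 2 * B.det := by
    exact_mod_cast K.norm_coords_eq_den_sq_mul_det hB
  simp only [eigenvalue]
  field_simp
  linear_combination h + K.x B * K.y B * hsum + K.y B ^ 2 * hprod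

theorem eigenvalue_mul (hA : A ∉ Set.range (scalar (Fin 2)))
    (hμ : μ ^ 2 = A.trace * μ - A.det) (hB : Commute A B) (hB' : Commute A B') :
    K.eigenvalue μ (B * B') = K.eigenvalue μ B * K.eigenvalue μ B' := by
  have hD : (K.den : ℝ) ≠ 0 := Int.cast_ne_zero.mpr K.den_ne_zero
  have hx : (K.den : ℝ) * K.x (B * B') = K.x B * K.x B' - A.det * (K.y B * K.y B') := by
    exact_mod_cast (K.den_mul_coords_mul hA hB hB').1
  have hy : (K.den : ℝ) * K.y (B * B') =
      K.x B * K.y B' + K.x B' * K.y B + A.trace * (K.y B * K.y B') := by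
    exact_mod_cast (K.den_mul_coords_mul hA hB hB').2
  simp only [eigenvalue]
  field_simp
  linear_combination hx + μ * hy - K.y B * K.y B' * hμ

theorem y_mul_div_den (hA : A ∉ Set.range (scalar (Fin 2))) (hμ : 2 * μ = A.trace)
    (hB : Commute A B) (hB' : Commute A B') :
    K.y (B * B') / K.den =
      K.eigenvalue μ B * (K.y B' / K.den) + K.eigenvalue μ B' * (K.y B / K.den) := by
  have hD : (K.den : ℝ) ≠ 0 := Int.cast_ne_zero.mpr K.den_ne_zero
  have hy : (K.den : ℝ) * K.y (B * B') =
      K.x B * K.y B' + K.x B' * K.y B + A.trace * (K.y B * K.y B') := by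
    exact_mod_cast (K.den_mul_coords_mul hA hB hB').2
  simp only [eigenvalue]
  field_simp
  rw [← hμ] at hy
  linear_combination hy

theorem abs_y_le (hμ : μ ≠ μ') :
    |(K.y B : ℝ)| ≤ |(K.den : ℝ)| * (|K.eigenvalue μ B| + |K.eigenvalue μ' B|) / |μ - μ'| := by
  rw [le_div_iff₀ (abs_pos.mpr (sub_ne_zero.mpr hμ)), ← abs_mul]
  calc |(K.y B : ℝ) * (μ - μ')| = |K.den * K.eigenvalue μ B - K.den * K.eigenvalue μ' B| := by
        rw [den_mul_eigenvalue, den_mul_eigenvalue]; congr 1; ring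
    _ ≤ _ := by rw [← mul_sub, abs_mul]; gcongr; exact abs_sub _ _

theorem one_le_abs_den_mul_abs_eigenvalue (m : ℤ) (h : K.eigenvalue m B ≠ 0) :
    1 ≤ |(K.den : ℝ)| * |K.eigenvalue m B| := by
  rw [← abs_mul, den_mul_eigenvalue]
  have : K.x B + K.y B * m ≠ 0 := fun h0 ↦
    h (by simp [eigenvalue, ← Int.cast_mul, ← Int.cast_add, h0])
  exact_mod_cast Int.one_le_abs this

end Eigenvalue

section GeneralLinearGroup

open GeneralLinearGroup

variable {A : GL (Fin 2) ℤ} (K : CentralizerCoords A.val) {μ μ' : ℝ}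

theorem finite_of_abs_le {S : Set (centralizer {A})} (kx ky : ℝ)
    (hS : ∀ B ∈ S, |(K.x (B : GL (Fin 2) ℤ) : ℝ)| ≤ kx ∧ |(K.y (B : GL (Fin 2) ℤ) : ℝ)| ≤ ky) :
    S.Finite := by
  have hinj : Set.InjOn (fun B : centralizer {A} ↦ (K.x (B : GL (Fin 2) ℤ), K.y (B : GL (Fin 2) ℤ)))
      S := fun B _ B' _ h ↦ Subtype.ext <| Units.ext <| K.injOn
        (commute_val_of_mem_centralizer B.2) (commute_val_of_mem_centralizer B'.2) h
  refine Set.Finite.of_finite_image ?_ hinj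
  refine (isCompact_closedBall (0 : ℤ × ℤ) (max kx ky)).finite_of_discrete.subset ?_
  rintro _ ⟨B, hB, rfl⟩
  simp only [Metric.mem_closedBall, dist_zero_right, norm_prod_le_iff, Int.norm_eq_abs]
  exact ⟨(hS B hB).1.trans (le_max_left _ _), (hS B hB).2.trans (le_max_right _ _)⟩

theorem finite_of_abs_eigenvalue_le_of_abs_y_le {S : Set (centralizer {A})} (k ky : ℝ)
    (hS : ∀ B ∈ S, |K.eigenvalue μ (B : GL (Fin 2) ℤ)| ≤ k ∧
      |(K.y (B : GL (Fin 2) ℤ) : ℝ)| ≤ ky) :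
    S.Finite := by
  refine K.finite_of_abs_le (|(K.den : ℝ)| * k + ky * |μ|) ky fun B hB ↦ ⟨?_, (hS B hB).2⟩
  set b : GL (Fin 2) ℤ := B.1
  calc |(K.x b : ℝ)| = |K.den * K.eigenvalue μ b - K.y b * μ| := by
        rw [den_mul_eigenvalue]; congr 1; ring
    _ ≤ |(K.den : ℝ)| * |K.eigenvalue μ b| + |(K.y b : ℝ)| * |μ| := by
        rw [← abs_mul, ← abs_mul]; exact abs_sub _ _
    _ ≤ _ := by gcongr <;> [exact (hS B hB).1; exact (hS B hB).2]

theorem finite_of_abs_eigenvalue_le (hμ : μ ≠ μ') {S : Set (centralizer {A})} (k : ℝ)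
    (hS : ∀ B ∈ S, |K.eigenvalue μ (B : GL (Fin 2) ℤ)| ≤ k ∧
      |K.eigenvalue μ' (B : GL (Fin 2) ℤ)| ≤ k) : S.Finite :=
  K.finite_of_abs_eigenvalue_le_of_abs_y_le k (|(K.den : ℝ)| * (k + k) / |μ - μ'|) fun B hB ↦
    ⟨(hS B hB).1, (K.abs_y_le hμ).trans (by gcongr <;> [exact (hS B hB).1; exact (hS B hB).2])⟩

theorem abs_eigenvalue_mul_abs_eigenvalue (hsum : μ + μ' = A.val.trace)
    (hprod : μ * μ' = A.val.det) {B : GL (Fin 2) ℤ} (hB : B ∈ centralizer {A}) :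
    |K.eigenvalue μ B| * |K.eigenvalue μ' B| = 1 := by
  rw [← abs_mul, K.eigenvalue_mul_eigenvalue hsum hprod (commute_val_of_mem_centralizer hB)]
  rcases val_det_eq_one_or_neg_one B with h | h <;> simp [h]

theorem abs_eigenvalue_le_abs_den (m' : ℤ) (hsum : μ + m' = A.val.trace)
    (hprod : μ * m' = A.val.det) {B : GL (Fin 2) ℤ} (hB : B ∈ centralizer {A}) :
    |K.eigenvalue μ B| ≤ |(K.den : ℝ)| := by
  have h := K.abs_eigenvalue_mul_abs_eigenvalue hsum hprod hB
  have h' := K.one_le_abs_den_mul_abs_eigenvalue m' (B := B) fun h0 ↦ by simp [h0] at h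
  nlinarith [abs_nonneg (K.eigenvalue μ B)]

/-- If `μ = ±1` then also `μ' = ±1`, so both eigenvalues of `B` lie in `den⁻¹ ℤ`; as their
product is `±1`, they are bounded. -/
theorem finite_centralizer_of_abs_eq_one (K : CentralizerCoords A.val) (hμ : μ ≠ μ')
    (hsum : μ + μ' = A.val.trace) (hprod : μ * μ' = A.val.det) (hμ1 : |μ| = 1) :
    Finite (centralizer {A}) := by
  obtain ⟨m, rfl⟩ : ∃ m : ℤ, μ = m := by
    rcases (abs_eq zero_le_one).mp hμ1 with h | h
    exacts [⟨1, by simp [h]⟩, ⟨-1, by simp [h]⟩]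
  obtain rfl : μ' = ((A.val.det * m : ℤ) : ℝ) := by
    have hm2 : (m : ℝ) ^ 2 = 1 := by rw [← sq_abs, hμ1, one_pow]
    rw [Int.cast_mul]
    linear_combination m * hprod - μ' * hm2
  rw [← Set.finite_univ_iff]
  refine K.finite_of_abs_eigenvalue_le hμ |(K.den : ℝ)| fun B _ ↦
    ⟨K.abs_eigenvalue_le_abs_den (A.val.det * m) hsum hprod B.2,
      K.abs_eigenvalue_le_abs_den m ?_ ?_ B.2⟩
  · rw [← hsum, add_comm]
  · rw [← hprod, mul_comm]

theorem finite_abs_log_abs_eigenvalue_le (hμ : μ ≠ μ') (hsum : μ + μ' = A.val.trace)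
    (hprod : μ * μ' = A.val.det) (M : ℝ) :
    {B : centralizer {A} | |Real.log (|K.eigenvalue μ (B : GL (Fin 2) ℤ)|)| ≤ M}.Finite := by
  refine K.finite_of_abs_eigenvalue_le hμ (Real.exp M) fun B hB ↦ ?_
  have hB : |Real.log (|K.eigenvalue μ (B : GL (Fin 2) ℤ)|)| ≤ M := hB
  have h := K.abs_eigenvalue_mul_abs_eigenvalue hsum hprod B.2
  have h0 : |K.eigenvalue μ (B : GL (Fin 2) ℤ)| ≠ 0 := fun h0 ↦ by simp [h0] at h
  have h0' : |K.eigenvalue μ' (B : GL (Fin 2) ℤ)| ≠ 0 := fun h0 ↦ by simp [h0] at h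
  have hlog := congrArg Real.log h
  rw [Real.log_mul h0 h0', Real.log_one] at hlog
  rw [← Real.log_le_iff_le_exp (lt_of_le_of_ne (abs_nonneg _) h0.symm),
    ← Real.log_le_iff_le_exp (lt_of_le_of_ne (abs_nonneg _) h0'.symm)]
  constructor <;> linarith [abs_le.mp hB]

end GeneralLinearGroup

end CentralizerCoords

namespace GeneralLinearGroup

open CentralizerCoords

theorem IsElliptic.finite_centralizer {A : GL (Fin 2) ℤ} (hA : A.IsElliptic) :
    Finite (centralizer {A}) := by
  obtain ⟨K⟩ := nonempty_centralizerCoords (notMem_range_scalar_of_discr_ne_zero hA.ne)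
  have hdisc : A.val.trace ^ 2 - 4 * A.val.det < 0 := by rw [← discr_fin_two]; exact hA
  rw [← Set.finite_univ_iff]
  refine K.finite_of_abs_le ((1 + |A.val.trace|) * |K.den|) (2 * |K.den|) fun ⟨B, hB⟩ _ ↦ ?_
  have hN : K.x B ^ 2 + A.val.trace * K.x B * K.y B + A.val.det * K.y B ^ 2 ≤ K.den ^ 2 := by
    rw [K.norm_coords_eq_den_sq_mul_det (commute_val_of_mem_centralizer hB)]
    rcases val_det_eq_one_or_neg_one B with h | h <;> rw [h] <;> nlinarith [sq_nonneg K.den]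
  obtain ⟨hx, hy⟩ := Int.abs_le_of_definite_form_le hdisc hN
  exact ⟨by exact_mod_cast hx, by exact_mod_cast hy⟩

theorem IsParabolic.finiteIndex_zpowers_subgroupOf_centralizer {A : GL (Fin 2) ℤ}
    (hA : A.IsParabolic) : ((zpowers A).subgroupOf (centralizer {A})).FiniteIndex := by
  obtain ⟨K⟩ := nonempty_centralizerCoords hA.1
  have hD : (K.den : ℝ) ≠ 0 := Int.cast_ne_zero.mpr K.den_ne_zero
  set μ : ℝ := A.val.trace / 2
  have h2μ : 2 * μ = A.val.trace := by ring
  have hμ2 : μ * μ = A.val.det := by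
    have : (A.val.trace : ℝ) ^ 2 = 4 * A.val.det := by
      exact_mod_cast (sub_eq_zero.mp ((discr_fin_two A.val).symm.trans hA.2))
    linear_combination this / 4
  have hφ (B : centralizer {A}) : |K.eigenvalue μ (B : GL (Fin 2) ℤ)| = 1 := by
    have := K.abs_eigenvalue_mul_abs_eigenvalue (by rw [← h2μ]; ring) hμ2 B.2
    nlinarith [abs_nonneg (K.eigenvalue μ (B : GL (Fin 2) ℤ))]
  have hφ0 (B : centralizer {A}) : K.eigenvalue μ (B : GL (Fin 2) ℤ) ≠ 0 := by
    simp [← abs_ne_zero, hφ]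
  let f (B : centralizer {A}) : ℝ :=
    K.y (B : GL (Fin 2) ℤ) / K.den / K.eigenvalue μ (B : GL (Fin 2) ℤ)
  rw [subgroupOf_zpowers ⟨A, mem_centralizer_singleton_self A⟩]
  refine Subgroup.finiteIndex_zpowers_of_additive f (fun B B' ↦ ?_) (fun M ↦ ?_) ?_
  · have hB := commute_val_of_mem_centralizer B.2
    have hB' := commute_val_of_mem_centralizer B'.2
    simp only [f, Subgroup.coe_mul, Units.val_mul]
    rw [K.y_mul_div_den hA.1 h2μ hB hB',
      K.eigenvalue_mul hA.1 (by rw [← h2μ]; linear_combination -hμ2) hB hB']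
    field_simp [hφ0 B, hφ0 B']
    ring
  · refine K.finite_of_abs_eigenvalue_le_of_abs_y_le 1 (|(K.den : ℝ)| * M) fun B hB ↦
      ⟨(hφ B).le, ?_⟩
    have hB : |f B| ≤ M := hB
    simp only [f, abs_div, hφ, div_one] at hB
    rwa [div_le_iff₀ (abs_pos.mpr hD), mul_comm] at hB
  · have hμ : μ ≠ 0 := by
      simpa [eigenvalue_self _ hA.1] using hφ0 ⟨A, mem_centralizer_singleton_self A⟩
    simp [f, (K.coords_self hA.1).2, hD, eigenvalue_self _ hA.1, hμ]

theorem IsHyperbolic.finiteIndex_zpowers_subgroupOf_centralizer {A : GL (Fin 2) ℤ}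
    (hA : A.IsHyperbolic) : ((zpowers A).subgroupOf (centralizer {A})).FiniteIndex := by
  have hns := notMem_range_scalar_of_discr_ne_zero hA.ne'
  obtain ⟨K⟩ := nonempty_centralizerCoords hns
  obtain ⟨μ, μ', hμ, hsum, hprod⟩ : ∃ μ μ' : ℝ, μ ≠ μ' ∧ μ + μ' = A.val.trace ∧
      μ * μ' = A.val.det := by
    refine Real.exists_ne_add_eq_mul_eq ?_
    have : 0 < A.val.trace ^ 2 - 4 * A.val.det := by rw [← discr_fin_two]; exact hA
    exact_mod_cast this
  rw [subgroupOf_zpowers ⟨A, mem_centralizer_singleton_self A⟩]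
  by_cases hμ1 : |μ| = 1
  · have := K.finite_centralizer_of_abs_eq_one hμ hsum hprod hμ1
    infer_instance
  have hφ (B : centralizer {A}) : K.eigenvalue μ (B : GL (Fin 2) ℤ) ≠ 0 := fun h ↦ by
    simpa [h] using K.abs_eigenvalue_mul_abs_eigenvalue hsum hprod B.2
  refine Subgroup.finiteIndex_zpowers_of_additive
    (fun B : centralizer {A} ↦ Real.log |K.eigenvalue μ (B : GL (Fin 2) ℤ)|) (fun B B' ↦ ?_)
    (K.finite_abs_log_abs_eigenvalue_le hμ hsum hprod) ?_
  · simp only [Subgroup.coe_mul, Units.val_mul]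
    rw [K.eigenvalue_mul hns (by linear_combination μ * hsum - hprod)
        (commute_val_of_mem_centralizer B.2) (commute_val_of_mem_centralizer B'.2),
      abs_mul, Real.log_mul (abs_ne_zero.mpr (hφ B)) (abs_ne_zero.mpr (hφ B'))]
  · have hμ0 : μ ≠ 0 := by
      simpa [eigenvalue_self _ hns] using hφ ⟨A, mem_centralizer_singleton_self A⟩
    simp only [eigenvalue_self _ hns, Real.log_ne_zero]
    exact ⟨abs_ne_zero.mpr hμ0, hμ1, by linarith [abs_nonneg μ]⟩

end GeneralLinearGroup

end Matrix

open Matrix.GeneralLinearGroup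

/-- (a) The centre of `GL₂(ℤ)` consists precisely of `I₂` and `-I₂`; (b) every
non-central `A ∈ GL₂(ℤ)` generates a subgroup `⟨A⟩` of finite index in its own
centraliser. -/
theorem stmt17 :
    (∀ A : Matrix.GeneralLinearGroup (Fin 2) ℤ,
        A ∈ Subgroup.center (Matrix.GeneralLinearGroup (Fin 2) ℤ) ↔ A = 1 ∨ A = -1) ∧
    (∀ A : Matrix.GeneralLinearGroup (Fin 2) ℤ,
        A ∉ Subgroup.center (Matrix.GeneralLinearGroup (Fin 2) ℤ) →
        ((Subgroup.zpowers A).subgroupOf (Subgroup.centralizer {A})).FiniteIndex) := by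
  refine ⟨fun A ↦ mem_center_iff_eq_one_or_eq_neg_one, fun A hA ↦ ?_⟩
  rcases lt_trichotomy A.val.discr 0 with h | h | h
  · have := IsElliptic.finite_centralizer h
    infer_instance
  · exact IsParabolic.finiteIndex_zpowers_subgroupOf_centralizer
      ⟨mem_center_iff_val_mem_range_scalar.not.mp hA, h⟩
  · exact IsHyperbolic.finiteIndex_zpowers_subgroupOf_centralizer h
end

section
/- Let F₂ = ⟨a,b⟩ be a free group of rank 2 and let φ ∈ Aut(F₂) be the automorphism defined by aφ = ab^k and bφ = b, where k is a nonzero integer. Then for every nonzero integer r, the fixed subgroup of φ^r equals the fixed subgroup of φ, which equals the subgroup ⟨aba⁻¹, b⟩. -/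
open Multiplicative

/-- The fixed subgroup `Fix ψ = {x : ψ x = x}` of an automorphism `ψ`. -/
def fixSubgroup {G : Type*} [Group G] (ψ : MulAut G) : Subgroup G where
  carrier := {x | ψ x = x}
  one_mem' := map_one ψ
  mul_mem' := by
    intro x y hx hy
    simp only [Set.mem_setOf_eq] at *
    rw [map_mul, hx, hy]
  inv_mem' := by
    intro x hx
    simp only [Set.mem_setOf_eq] at *
    rw [map_inv, hx]

/-!
Every element of `F₂` has a unique reduced syllable form `b^c₀ a^(±1) b^c₁ ⋯ a^(±1) b^cₙ`
(uniqueness via the usual van der Waerden action on reduced forms). Since `a ↦ a b^k` and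
`a⁻¹ ↦ b^(-k) a⁻¹`, the automorphism acts on syllable forms by shifting exponents, and a form is
fixed exactly when its syllables pair up as `a b^c a⁻¹ b^c'`, i.e. it lies in `⟨a b a⁻¹, b⟩`.
Since `φ^r` is again of the same shape, with `k r` in place of `k`, it has the same fixed subgroup.
-/

namespace DehnTwist

abbrev F := FreeGroup (Fin 2)

noncomputable def a : F := FreeGroup.of 0
noncomputable def b : F := FreeGroup.of 1

/-- `(e, c)` is the syllable `a^(±1) b^c`, the sign being `+` iff `e`. -/
abbrev Syllable := Bool × ℤ

noncomputable def aSign (e : Bool) : F := cond e a a⁻¹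

/-- A word of syllables is reduced when no `a^(±1) b^0 a^(∓1)` occurs in it. -/
def IsReduced (l : List Syllable) : Prop := l.IsChain fun p q => p.2 = 0 → p.1 = q.1

noncomputable def evalList : List Syllable → F
  | [] => 1
  | (e, c) :: r => aSign e * b ^ c * evalList r

noncomputable def eval (p : ℤ × List Syllable) : F := b ^ p.1 * evalList p.2

@[simp] lemma evalList_nil : evalList [] = 1 := rfl

@[simp] lemma evalList_cons (e : Bool) (c : ℤ) (r : List Syllable) :
    evalList ((e, c) :: r) = aSign e * b ^ c * evalList r := rfl

lemma eval_cons (c₀ : ℤ) (e : Bool) (c : ℤ) (r : List Syllable) :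
    eval (c₀, (e, c) :: r) = b ^ c₀ * (aSign e * eval (c, r)) := by
  simp only [eval, evalList_cons, mul_assoc]

def push (e : Bool) : ℤ × List Syllable → ℤ × List Syllable
  | (c₀, (e', c) :: r) => if c₀ = 0 ∧ e' = !e then (c, r) else (0, (e, c₀) :: (e', c) :: r)
  | (c₀, []) => (0, [(e, c₀)])

lemma eval_push (e : Bool) (p : ℤ × List Syllable) : eval (push e p) = aSign e * eval p := by
  obtain ⟨c₀, _ | ⟨⟨e', c⟩, r⟩⟩ := p
  · simp [push, eval]
  · simp only [push]
    split_ifs with h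
    · obtain ⟨rfl, rfl⟩ := h
      cases e <;> simp [eval, aSign, mul_assoc]
    · simp [eval, mul_assoc]

lemma isReduced_push (e : Bool) {p : ℤ × List Syllable} (h : IsReduced p.2) :
    IsReduced (push e p).2 := by
  obtain ⟨c₀, _ | ⟨⟨e', c⟩, r⟩⟩ := p
  · simp [push, IsReduced]
  · simp only [push]
    split_ifs with h'
    · exact h.tail
    · refine List.IsChain.cons_cons (fun hc => ?_) h
      simp_all

lemma push_of_isReduced_cons {e : Bool} {c : ℤ} {r : List Syllable}
    (h : IsReduced ((e, c) :: r)) : push e (c, r) = (0, (e, c) :: r) := by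
  match r, h with
  | [], _ => rfl
  | (e', c') :: r', h =>
    have hzero := (List.isChain_cons_cons.mp h).1
    simp only [push]
    rw [if_neg]
    rintro ⟨rfl, rfl⟩
    cases e <;> simp at hzero

lemma push_not_push {e : Bool} {p : ℤ × List Syllable} (h : IsReduced p.2) :
    push (!e) (push e p) = p := by
  obtain ⟨c₀, _ | ⟨⟨e', c⟩, r⟩⟩ := p
  · simp [push]
  · by_cases hcancel : c₀ = 0 ∧ e' = !e
    · obtain ⟨rfl, rfl⟩ := hcancel
      have hpush : push e (0, (!e, c) :: r) = (c, r) := by simp [push]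
      rw [hpush, push_of_isReduced_cons (by simpa using h)]
    · have hpush : push e (c₀, (e', c) :: r) = (0, (e, c₀) :: (e', c) :: r) := by
        simp only [push, if_neg hcancel]
      rw [hpush]
      simp [push]

abbrev ReducedForm := {p : ℤ × List Syllable // IsReduced p.2}

def pushPerm (e : Bool) : Equiv.Perm ReducedForm where
  toFun p := ⟨push e p.1, isReduced_push e p.2⟩
  invFun p := ⟨push (!e) p.1, isReduced_push (!e) p.2⟩
  left_inv p := Subtype.ext (push_not_push p.2)
  right_inv p := Subtype.ext (by simpa using push_not_push (e := !e) p.2)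

def shiftPerm : Equiv.Perm ReducedForm where
  toFun p := ⟨(p.1.1 + 1, p.1.2), p.2⟩
  invFun p := ⟨(p.1.1 - 1, p.1.2), p.2⟩
  left_inv p := Subtype.ext (by simp)
  right_inv p := Subtype.ext (by simp)

noncomputable def act : F →* Equiv.Perm ReducedForm := FreeGroup.lift ![pushPerm true, shiftPerm]

lemma act_aSign (e : Bool) : act (aSign e) = pushPerm e := by
  have act_a : act a = pushPerm true := FreeGroup.lift_apply_of
  cases e
  · rw [aSign, cond_false, map_inv, act_a]
    exact Equiv.ext fun _ => rfl
  · exact act_a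

lemma act_b_zpow (n : ℤ) (p : ReducedForm) : act (b ^ n) p = ⟨(p.1.1 + n, p.1.2), p.2⟩ := by
  have act_b : act b = shiftPerm := FreeGroup.lift_apply_of
  rw [map_zpow, act_b]
  induction n using Int.induction_on generalizing p with
  | zero => exact Subtype.ext (by simp)
  | succ n ih =>
    rw [zpow_add_one, Equiv.Perm.mul_apply, ih]
    exact Subtype.ext (Prod.ext (show p.1.1 + 1 + (n : ℤ) = _ by ring) rfl)
  | pred n ih =>
    rw [zpow_sub_one, Equiv.Perm.mul_apply, ih]
    exact Subtype.ext (Prod.ext (show p.1.1 - 1 + -(n : ℤ) = _ by ring) rfl)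

lemma eval_act (w : F) (p : ReducedForm) : eval (act w p).1 = w * eval p.1 := by
  induction w using FreeGroup.induction_on generalizing p with
  | C1 => simp
  | of x =>
    fin_cases x
    · exact eval_push true p.1
    · have h := act_b_zpow 1 p
      rw [zpow_one] at h
      change eval (act b p).1 = b * _
      rw [h, eval, eval, zpow_add_one, ← (Commute.self_zpow b _).eq, mul_assoc]
  | inv_of x ih =>
    have h := ih ((act (.of x))⁻¹ p)
    rw [Equiv.Perm.coe_inv, Equiv.apply_symm_apply] at h
    rw [map_inv, Equiv.Perm.coe_inv, h, inv_mul_cancel_left]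
  | mul x y ihx ihy => rw [map_mul, Equiv.Perm.mul_apply, ihx, ihy, mul_assoc]

def basepoint : ReducedForm := ⟨(0, []), List.isChain_nil⟩

lemma act_eval_basepoint (p : ReducedForm) : act (eval p.1) basepoint = p := by
  obtain ⟨⟨c₀, l⟩, hl⟩ := p
  induction l generalizing c₀ with
  | nil =>
    rw [show eval (c₀, []) = b ^ c₀ by simp [eval], act_b_zpow]
    exact Subtype.ext (by simp [basepoint])
  | cons s r ih =>
    obtain ⟨e, c⟩ := s
    have hpush : pushPerm e ⟨(c, r), hl.tail⟩ = ⟨(0, (e, c) :: r), hl⟩ :=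
      Subtype.ext (push_of_isReduced_cons hl)
    rw [eval_cons, map_mul, map_mul, Equiv.Perm.mul_apply, Equiv.Perm.mul_apply, ih c hl.tail,
      act_aSign, hpush, act_b_zpow]
    exact Subtype.ext (by simp)

theorem eq_of_eval_eq {p q : ℤ × List Syllable} (hp : IsReduced p.2) (hq : IsReduced q.2)
    (h : eval p = eval q) : p = q :=
  congrArg Subtype.val ((act_eval_basepoint ⟨p, hp⟩).symm.trans (h ▸ act_eval_basepoint ⟨q, hq⟩))

theorem exists_eval_eq (w : F) : ∃ p : ℤ × List Syllable, IsReduced p.2 ∧ eval p = w :=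
  ⟨_, (act w basepoint).2, by simpa [basepoint, eval] using eval_act w basepoint⟩

/-- Under `a ↦ a b^k`, `b ↦ b`, each `a⁻¹ ↦ b^(-k) a⁻¹` hands `b^(-k)` to the syllable on its
left; `carry k l` is the exponent that the word `l` hands on. -/
def carry (k : ℤ) : List Syllable → ℤ
  | (false, _) :: _ => k
  | _ => 0

def twist (k : ℤ) : List Syllable → List Syllable
  | [] => []
  | (true, c) :: r => (true, c + k - carry k r) :: twist k r
  | (false, c) :: r => (false, c - carry k r) :: twist k r

/-- `twist` only changes the exponent of a syllable followed by one of the same sign. -/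
lemma isReduced_twist (k : ℤ) : ∀ {l : List Syllable}, IsReduced l → IsReduced (twist k l)
  | [], _ => List.isChain_nil
  | [(e, c)], _ => by cases e <;> simp [twist, IsReduced]
  | (e, c) :: (e', c') :: r, h => by
    obtain ⟨hhead, htail⟩ := List.isChain_cons_cons.mp h
    have htwist := isReduced_twist k htail
    cases e <;> cases e' <;> simp_all [twist, carry, IsReduced]

section Twist

variable {k : ℤ} {ψ : MulAut F}

lemma map_evalList (hψa : ψ a = a * b ^ k) (hψb : ψ b = b) (l : List Syllable) :
    ψ (evalList l) = b ^ (-carry k l) * evalList (twist k l) := by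
  induction l with
  | nil => simp [carry, twist]
  | cons s r ih =>
    obtain ⟨_ | _, c⟩ := s <;>
    · simp only [evalList_cons, aSign, cond_true, cond_false, map_mul, map_inv, map_zpow, hψa, hψb,
        ih, carry, twist]
      group

lemma map_eval (hψa : ψ a = a * b ^ k) (hψb : ψ b = b) (c₀ : ℤ) (l : List Syllable) :
    ψ (eval (c₀, l)) = eval (c₀ - carry k l, twist k l) := by
  simp only [eval, map_mul, map_zpow, hψb, map_evalList hψa hψb]
  group

lemma evalList_mem_closure_of_twist_eq (hk : k ≠ 0) :
    ∀ {l : List Syllable}, carry k l = 0 → twist k l = l →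
      evalList l ∈ Subgroup.closure {a * b * a⁻¹, b}
  | [], _, _ => one_mem _
  | (false, _) :: _, hcarry, _ => absurd hcarry hk
  | [(true, c)], _, htwist => by simp_all [twist, carry]
  | (true, c) :: (true, c') :: r, _, htwist => by simp_all [twist, carry]
  | (true, c) :: (false, c') :: r, _, htwist => by
    simp only [twist, carry, List.cons.injEq, Prod.mk.injEq, sub_eq_self] at htwist
    have hcons : evalList ((true, c) :: (false, c') :: r) =
        (a * b * a⁻¹) ^ c * b ^ c' * evalList r := by
      rw [conj_zpow]
      simp [aSign, mul_assoc]
    rw [hcons]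
    exact mul_mem (mul_mem (zpow_mem (Subgroup.subset_closure (by simp)) c)
      (zpow_mem (Subgroup.subset_closure (by simp)) c'))
      (evalList_mem_closure_of_twist_eq hk htwist.2.1.2 htwist.2.2)

theorem fixSubgroup_eq_closure (hk : k ≠ 0) (hψa : ψ a = a * b ^ k) (hψb : ψ b = b) :
    fixSubgroup ψ = Subgroup.closure {a * b * a⁻¹, b} := by
  apply le_antisymm
  · intro w hw
    obtain ⟨⟨c₀, l⟩, hl, rfl⟩ := exists_eval_eq w
    have hfix : (c₀ - carry k l, twist k l) = (c₀, l) :=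
      eq_of_eval_eq (isReduced_twist k hl) hl ((map_eval hψa hψb c₀ l).symm.trans hw)
    simp only [Prod.mk.injEq, sub_eq_self] at hfix
    exact mul_mem (zpow_mem (Subgroup.subset_closure (by simp)) c₀)
      (evalList_mem_closure_of_twist_eq hk hfix.1 hfix.2)
  · rw [Subgroup.closure_le]
    rintro _ (rfl | rfl)
    · change ψ (a * b * a⁻¹) = a * b * a⁻¹
      simp only [map_mul, map_inv, hψa, hψb]
      group
    · exact hψb

lemma zpow_apply_b (hψb : ψ b = b) (r : ℤ) : (ψ ^ r) b = b :=
  MulAction.mem_fixedBy_zpow (g := ψ) (a := b) hψb r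

lemma zpow_apply_a (hψa : ψ a = a * b ^ k) (hψb : ψ b = b) (r : ℤ) :
    (ψ ^ r) a = a * b ^ (k * r) := by
  induction r using Int.induction_on with
  | zero => simp
  | succ n ih =>
    rw [zpow_add_one, MulAut.mul_apply, hψa, map_mul, map_zpow, ih, zpow_apply_b hψb]
    group
  | pred n ih =>
    have hinv : ψ⁻¹ a = a * b ^ (-k) := by
      have hψ : ψ (a * b ^ (-k)) = a := by
        simp only [map_mul, map_zpow, hψa, hψb]
        group
      conv_lhs => rw [← hψ, MulAut.inv_apply_self]
    rw [zpow_sub_one, MulAut.mul_apply, hinv, map_mul, map_zpow, ih, zpow_apply_b hψb]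
    group

end Twist

end DehnTwist

/-- If `φ` is the automorphism of `F₂ = ⟨a,b⟩` with `aφ = a * b^k`, `bφ = b` (`k ≠ 0`),
then for every nonzero integer `r` the fixed subgroup of `φ^r` equals that of `φ`,
which equals `⟨a b a⁻¹, b⟩`. -/
theorem stmt18 (k : ℤ) (hk : k ≠ 0) (a b : FreeGroup (Fin 2))
    (ha : a = FreeGroup.of 0) (hb : b = FreeGroup.of 1)
    (φ : MulAut (FreeGroup (Fin 2))) (hφa : φ a = a * b ^ k) (hφb : φ b = b)
    (r : ℤ) (hr : r ≠ 0) :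
    fixSubgroup (φ ^ r) = fixSubgroup φ ∧
    fixSubgroup φ = Subgroup.closure {a * b * a⁻¹, b} := by
  subst ha hb
  have hfix := DehnTwist.fixSubgroup_eq_closure hk hφa hφb
  refine ⟨?_, hfix⟩
  rw [hfix, DehnTwist.fixSubgroup_eq_closure (mul_ne_zero hk hr)
    (DehnTwist.zpow_apply_a hφa hφb r) (DehnTwist.zpow_apply_b hφb r)]
end

section
/- Let F₂ = ⟨a,b⟩ be a free group of rank 2 and let φ ∈ Aut(F₂) be the automorphism defined by aφ = ab^k and bφ = b, where k is a nonzero integer. If r is a nonzero integer and w ∈ F₂ is such that wφ^r is conjugate to w in F₂, then w is conjugate in F₂ to an element fixed by φ. -/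
/-!
Write a cyclically reduced conjugate of `w` as a cyclic product of blocks `a^(±1) b^m`. The
automorphism `φ^N`, which sends `a ↦ a b^(Nk)`, changes the exponent `m` of a block by `±Nk` when
its `a`-letter has the same sign as the next one and leaves it unchanged otherwise, and the result
is again cyclically reduced. The number of `b`-letters of a cyclically reduced word is a conjugacy
invariant (it governs the growth of the word length of powers), so if `wφ^N` is conjugate to `w`
with `|Nk|` larger than twice that number, consecutive `a`-letters alternate in sign. Such a word
`∏ a b^s a⁻¹ b^t` is fixed by `φ`, and one that starts with `a⁻¹` becomes fixed after conjugation
by `a`.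
-/

namespace FreeGroup

variable {α : Type*} {L L₁ L₂ : List (α × Bool)}

theorem isCyclicallyReduced_iff_isReduced_append_self :
    IsCyclicallyReduced L ↔ IsReduced (L ++ L) := by
  simp [IsCyclicallyReduced, IsReduced, List.isChain_append]

theorem isCyclicallyReduced_iff_isReduced_append_singleton {x : α × Bool}
    (hx : L.head? = some x) : IsCyclicallyReduced L ↔ IsReduced (L ++ [x]) := by
  simp [IsCyclicallyReduced, IsReduced, List.isChain_append, hx]

theorem IsCyclicallyReduced.append_comm (h : IsCyclicallyReduced (L₁ ++ L₂)) :
    IsCyclicallyReduced (L₂ ++ L₁) := by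
  rw [isCyclicallyReduced_iff_isReduced_append_self]
  refine (h.flatten_replicate 3).isReduced.infix ⟨L₁, L₂, ?_⟩
  simp [List.replicate_succ]

theorem mk_replicate (n : ℕ) (a : α) : mk (List.replicate n (a, true)) = of a ^ n := by
  rw [of, pow_mk, List.flatten_replicate_singleton]

theorem exists_isCyclicallyReduced_isConj [DecidableEq α] (w : FreeGroup α) :
    ∃ L, IsCyclicallyReduced L ∧ IsConj w (mk L) := by
  refine ⟨reduceCyclically w.toWord, reduceCyclically.isCyclicallyReduced isReduced_toWord, ?_⟩
  have hw := congrArg mk (reduceCyclically.conj_conjugator_reduceCyclically w.toWord)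
  rw [mk_toWord, ← mul_mk, ← mul_mk, ← inv_mk] at hw
  exact (isConj_iff.mpr ⟨_, hw⟩).symm

variable [DecidableEq α]

def letterCount (i : α) (L : List (α × Bool)) : ℕ := L.countP (·.1 = i)

variable {i : α}

theorem letterCount_append : letterCount i (L₁ ++ L₂) = letterCount i L₁ + letterCount i L₂ :=
  List.countP_append

theorem letterCount_invRev : letterCount i (invRev L) = letterCount i L := by
  simp [letterCount, invRev, List.countP_map, Function.comp_def]

theorem letterCount_toWord_mk_le : letterCount i (mk L).toWord ≤ letterCount i L := by
  rw [toWord_mk]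
  exact reduce.red.sublist.countP_le

theorem letterCount_toWord_mul_le (x y : FreeGroup α) :
    letterCount i (x * y).toWord ≤ letterCount i x.toWord + letterCount i y.toWord :=
  (toWord_mul_sublist x y).countP_le.trans_eq letterCount_append

theorem letterCount_toWord_inv (x : FreeGroup α) :
    letterCount i x⁻¹.toWord = letterCount i x.toWord := by
  rw [toWord_inv, letterCount_invRev]

theorem letterCount_toWord_pow_le (x : FreeGroup α) (n : ℕ) :
    letterCount i (x ^ n).toWord ≤ n * letterCount i x.toWord := by
  induction n with
  | zero => simp [letterCount]
  | succ n ih =>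
    calc letterCount i (x ^ (n + 1)).toWord
        ≤ letterCount i (x ^ n).toWord + letterCount i x.toWord := by
          rw [pow_succ]; exact letterCount_toWord_mul_le _ _
      _ ≤ (n + 1) * letterCount i x.toWord := by rw [add_mul, one_mul]; gcongr

theorem IsCyclicallyReduced.letterCount_toWord_mk_pow (h : IsCyclicallyReduced L) (n : ℕ) :
    letterCount i (mk L ^ n).toWord = n * letterCount i L := by
  rw [pow_mk, toWord_mk, (h.flatten_replicate n).isReduced.reduce_eq]
  simp [letterCount, List.countP_flatten]

/-- The count in `(mk L₁) ^ n` is `n` times the count in `L₁`, while conjugation changes counts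
only by a bounded amount. -/
theorem IsCyclicallyReduced.letterCount_le_of_isConj (h : IsCyclicallyReduced L₁)
    (hconj : IsConj (mk L₁) (mk L₂)) : letterCount i L₁ ≤ letterCount i L₂ := by
  obtain ⟨g, hg⟩ := isConj_iff.mp hconj
  have hbound : ∀ n : ℕ,
      n * letterCount i L₁ ≤ n * letterCount i L₂ + 2 * letterCount i g.toWord := by
    intro n
    have hpow : mk L₁ ^ n = g⁻¹ * mk L₂ ^ n * g := by rw [← hg, conj_pow]; group
    calc n * letterCount i L₁ = letterCount i (g⁻¹ * mk L₂ ^ n * g).toWord := by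
          rw [← hpow, h.letterCount_toWord_mk_pow]
      _ ≤ letterCount i g⁻¹.toWord + letterCount i (mk L₂ ^ n).toWord + letterCount i g.toWord :=
          (letterCount_toWord_mul_le _ _).trans
            (Nat.add_le_add_right (letterCount_toWord_mul_le _ _) _)
      _ ≤ letterCount i g.toWord + n * letterCount i L₂ + letterCount i g.toWord := by
          rw [letterCount_toWord_inv]
          gcongr
          exact (letterCount_toWord_pow_le _ n).trans
            (Nat.mul_le_mul_left n letterCount_toWord_mk_le)
      _ = n * letterCount i L₂ + 2 * letterCount i g.toWord := by ring
  by_contra hlt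
  have := hbound (2 * letterCount i g.toWord + 1)
  nlinarith

end FreeGroup

theorem IsConj.pow_apply {G : Type*} [Group G] {f : MulAut G} {x : G} (h : IsConj (f x) x)
    (n : ℕ) : IsConj ((f ^ n) x) x := by
  induction n with
  | zero => exact IsConj.refl x
  | succ n ih =>
    rw [pow_succ, MulAut.mul_apply]
    exact ((f ^ n).toMonoidHom.map_isConj h).trans ih

theorem MulAut.zpow_apply_eq_self {G : Type*} [Group G] {f : MulAut G} {x : G} (h : f x = x)
    (n : ℤ) : (f ^ n) x = x :=
  Subgroup.zpow_mem (MulAction.stabilizer (MulAut G) x) (x := f) h n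

namespace Transvection

open FreeGroup

def bword (m : ℤ) : List (Fin 2 × Bool) := List.replicate m.natAbs (1, decide (0 < m))

/-- A block `(ε, m)` stands for `a^(±1) b^m`, where `ε` is the sign of the `a`-letter. -/
def blockWord : List (Bool × ℤ) → List (Fin 2 × Bool)
  | [] => []
  | (ε, m) :: t => (0, ε) :: (bword m ++ blockWord t)

def bsum (L : List (Bool × ℤ)) : ℕ := (L.map fun x => x.2.natAbs).sum

theorem mk_bword (m : ℤ) : mk (bword m) = of 1 ^ m := by
  obtain ⟨n, rfl | rfl⟩ := Int.eq_nat_or_neg m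
  · rcases n.eq_zero_or_pos with rfl | hn
    · rfl
    · rw [bword, Int.natAbs_natCast, decide_eq_true (by exact_mod_cast hn), mk_replicate,
        zpow_natCast]
  · have hinv : List.replicate n ((1 : Fin 2), false) = invRev (List.replicate n (1, true)) := by
      simp [invRev]
    rw [bword, Int.natAbs_neg, Int.natAbs_natCast, decide_eq_false (by omega), hinv, ← inv_mk,
      mk_replicate, zpow_neg, zpow_natCast]

theorem letterCount_blockWord (L : List (Bool × ℤ)) : letterCount 1 (blockWord L) = bsum L := by
  induction L with
  | nil => rfl
  | cons x t ih =>
    simp [blockWord, bsum, letterCount, bword, List.countP_replicate] at ih ⊢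
    omega

theorem mk_blockWord_cons (ε : Bool) (m : ℤ) (t : List (Bool × ℤ)) :
    mk (blockWord ((ε, m) :: t)) = mk [(0, ε)] * of 1 ^ m * mk (blockWord t) := by
  rw [← mk_bword, mul_mk, mul_mk]; rfl

theorem cons_bword {s : Bool} {p : ℤ} (hs : p ≠ 0 → s = decide (0 < p)) :
    (1, s) :: bword p = bword (p + if s then 1 else -1) := by
  rcases eq_or_ne p 0 with rfl | hp
  · cases s <;> rfl
  · obtain rfl := hs hp
    rcases lt_or_gt_of_ne hp with hp | hp
    · simp [bword, hp.not_gt, ← List.replicate_succ]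
      omega
    · simp [bword, hp, show 0 < p + 1 by omega, ← List.replicate_succ]
      omega

theorem exists_eq_bword_append_blockWord {l : List (Fin 2 × Bool)} (hl : IsReduced l) :
    ∃ p L, l = bword p ++ blockWord L := by
  induction l with
  | nil => exact ⟨0, [], rfl⟩
  | cons x l ih =>
    obtain ⟨p, L, rfl⟩ := ih (hl.infix (List.suffix_cons x l).isInfix)
    obtain ⟨i, s⟩ := x
    fin_cases i
    · exact ⟨0, (s, p) :: L, rfl⟩
    · refine ⟨p + if s then 1 else -1, L, ?_⟩
      rw [← cons_bword]
      · rfl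
      intro hp
      obtain ⟨n, hn⟩ : ∃ n, p.natAbs = n + 1 := Nat.exists_eq_succ_of_ne_zero (by omega)
      rw [bword, hn, List.replicate_succ, List.cons_append] at hl
      exact (isReduced_cons_cons.mp hl).1 rfl

/-- The sign of the first `a`-letter of `blockWord L ++ [(0, e)]`: `e` stands for the `a`-letter
after the last block, which for a cyclic word is the first one. -/
def nextSign (e : Bool) : List (Bool × ℤ) → Bool
  | [] => e
  | x :: _ => x.1

def BlockReduced (e : Bool) : List (Bool × ℤ) → Prop
  | [] => True
  | (ε, m) :: t => (m = 0 → nextSign e t = ε) ∧ BlockReduced e t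

theorem blockWord_append_eq_cons (e : Bool) (L : List (Bool × ℤ)) :
    ∃ R, blockWord L ++ [(0, e)] = (0, nextSign e L) :: R := by
  cases L with
  | nil => exact ⟨[], rfl⟩
  | cons x t => exact ⟨_, rfl⟩

theorem isReduced_bword_append {m : ℤ} {R : List (Fin 2 × Bool)} (hR : ∀ y ∈ R.head?, y.1 = 0) :
    IsReduced (bword m ++ R) ↔ IsReduced R := by
  simp only [FreeGroup.IsReduced, List.isChain_append, bword]
  refine ⟨fun h => h.2.1, fun h => ⟨List.isChain_replicate_of_rel _ fun _ => rfl, h, ?_⟩⟩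
  intro x hx y hy hxy
  rw [List.eq_of_mem_replicate (List.mem_of_mem_getLast? hx), hR y hy] at hxy
  exact absurd hxy Fin.zero_lt_one.ne'

theorem head?_bword {m : ℤ} (hm : m ≠ 0) : (bword m).head? = some (1, decide (0 < m)) := by
  simp [bword, List.head?_replicate, hm]

theorem isReduced_blockWord_append_iff (e : Bool) (L : List (Bool × ℤ)) :
    IsReduced (blockWord L ++ [(0, e)]) ↔ BlockReduced e L := by
  induction L with
  | nil => simp [blockWord, BlockReduced]
  | cons x t ih =>
    obtain ⟨ε, m⟩ := x
    obtain ⟨R, hR⟩ := blockWord_append_eq_cons e t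
    rw [blockWord, List.cons_append, List.append_assoc, BlockReduced, ← ih, hR]
    rcases eq_or_ne m 0 with rfl | hm
    · simp [bword, isReduced_cons_cons, eq_comm]
    · rw [FreeGroup.IsReduced, List.isChain_cons, List.head?_append, head?_bword hm,
        ← FreeGroup.IsReduced, isReduced_bword_append (by simp)]
      simp [hm]

theorem nextSign_nextSign (e : Bool) (L : List (Bool × ℤ)) :
    nextSign (nextSign e L) L = nextSign e L := by
  cases L <;> rfl

theorem isCyclicallyReduced_blockWord_iff {e : Bool} {L : List (Bool × ℤ)}
    (he : nextSign e L = e) : IsCyclicallyReduced (blockWord L) ↔ BlockReduced e L := by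
  rw [← isReduced_blockWord_append_iff]
  cases L with
  | nil => simp [blockWord]
  | cons x t =>
    obtain ⟨ε, m⟩ := x
    obtain rfl : ε = e := he
    exact isCyclicallyReduced_iff_isReduced_append_singleton rfl

theorem exists_eq_blockWord {l : List (Fin 2 × Bool)} (hl : IsReduced l)
    (hhead : ∀ x ∈ l.head?, x.1 = 0) : ∃ L, l = blockWord L := by
  obtain ⟨p, L, rfl⟩ := exists_eq_bword_append_blockWord hl
  obtain rfl : p = 0 := by
    by_contra hp
    have := hhead _ (by rw [List.head?_append, head?_bword hp]; rfl)
    exact absurd this Fin.zero_lt_one.ne'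
  exact ⟨L, rfl⟩

theorem bword_or_isConj_blockWord {l : List (Fin 2 × Bool)} (hl : IsCyclicallyReduced l) :
    (∃ p, l = bword p) ∨
      ∃ e L, nextSign e L = e ∧ BlockReduced e L ∧ IsConj (mk l) (mk (blockWord L)) := by
  obtain ⟨p, L, rfl⟩ := exists_eq_bword_append_blockWord hl.isReduced
  cases L with
  | nil => exact .inl ⟨p, List.append_nil _⟩
  | cons x t =>
    have hrot := hl.append_comm
    obtain ⟨L', hL'⟩ := exists_eq_blockWord hrot.isReduced (by simp [blockWord])
    rw [hL'] at hrot
    refine .inr ⟨nextSign true L', L', nextSign_nextSign _ _,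
      (isCyclicallyReduced_blockWord_iff (nextSign_nextSign _ _)).mp hrot, ?_⟩
    rw [← hL', ← mul_mk, ← mul_mk]
    exact isConj_iff.mpr ⟨mk (blockWord (x :: t)), by group⟩

/-- Under `a ↦ a b^K` the exponent of a block `(ε, m)` followed by an `a`-letter of sign `ε'`
changes by `K * shiftCoeff ε ε'`, which vanishes exactly when `ε ≠ ε'`. -/
def shiftCoeff (ε ε' : Bool) : ℤ := ε.toInt - (!ε').toInt

def shift (K : ℤ) (e : Bool) : List (Bool × ℤ) → List (Bool × ℤ)
  | [] => []
  | (ε, m) :: t => (ε, m + K * shiftCoeff ε (nextSign e t)) :: shift K e t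

def sameSignPairs (e : Bool) : List (Bool × ℤ) → ℕ
  | [] => 0
  | (ε, _) :: t => (if ε = nextSign e t then 1 else 0) + sameSignPairs e t

theorem shiftCoeff_of_ne {ε ε' : Bool} (h : ε' ≠ ε) : shiftCoeff ε ε' = 0 := by
  cases ε <;> cases ε' <;> simp_all [shiftCoeff]

theorem natAbs_shiftCoeff (ε ε' : Bool) :
    (shiftCoeff ε ε').natAbs = if ε = ε' then 1 else 0 := by
  cases ε <;> cases ε' <;> rfl

theorem nextSign_shift (K : ℤ) (e : Bool) (L : List (Bool × ℤ)) :
    nextSign e (shift K e L) = nextSign e L := by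
  rcases L with _ | ⟨⟨ε, m⟩, t⟩ <;> rfl

theorem BlockReduced.shift (K : ℤ) {e : Bool} {L : List (Bool × ℤ)} (h : BlockReduced e L) :
    BlockReduced e (shift K e L) := by
  induction L with
  | nil => trivial
  | cons x t ih =>
    obtain ⟨ε, m⟩ := x
    refine ⟨fun hm => ?_, ih h.2⟩
    rw [nextSign_shift]
    by_contra hne
    rw [shiftCoeff_of_ne hne, mul_zero, add_zero] at hm
    exact hne (h.1 hm)

theorem shift_eq_self (K : ℤ) {e : Bool} {L : List (Bool × ℤ)} (h : sameSignPairs e L = 0) :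
    shift K e L = L := by
  induction L with
  | nil => rfl
  | cons x t ih =>
    obtain ⟨ε, m⟩ := x
    simp only [sameSignPairs, Nat.add_eq_zero_iff, ite_eq_right_iff, one_ne_zero] at h
    rw [shift, shiftCoeff_of_ne (Ne.symm h.1), mul_zero, add_zero, ih h.2]

theorem natAbs_mul_sameSignPairs_le (K : ℤ) (e : Bool) (L : List (Bool × ℤ)) :
    K.natAbs * sameSignPairs e L ≤ bsum (shift K e L) + bsum L := by
  induction L with
  | nil => simp [sameSignPairs]
  | cons x t ih =>
    obtain ⟨ε, m⟩ := x
    have hblock : (K * shiftCoeff ε (nextSign e t)).natAbs ≤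
        (m + K * shiftCoeff ε (nextSign e t)).natAbs + m.natAbs := by
      simpa using Int.natAbs_sub_le (m + K * shiftCoeff ε (nextSign e t)) m
    rw [Int.natAbs_mul, natAbs_shiftCoeff] at hblock
    simp only [shift, sameSignPairs, bsum, List.map_cons, List.sum_cons] at ih ⊢
    rw [mul_add]
    omega

theorem map_mk_singleton_zero {F : Type*} [FunLike F (FreeGroup (Fin 2)) (FreeGroup (Fin 2))]
    [MonoidHomClass F (FreeGroup (Fin 2)) (FreeGroup (Fin 2))] {ψ : F} {K : ℤ}
    (ha : ψ (of 0) = of 0 * of 1 ^ K) (ε : Bool) :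
    ψ (mk [(0, ε)]) = of 1 ^ (-(K * (!ε).toInt)) * mk [(0, ε)] * of 1 ^ (K * ε.toInt) := by
  cases ε
  · show ψ (of 0)⁻¹ = _ * (of 0)⁻¹ * _
    simp [ha]
  · show ψ (of 0) = _ * of 0 * _
    simp [ha]

theorem map_mk_blockWord {F : Type*} [FunLike F (FreeGroup (Fin 2)) (FreeGroup (Fin 2))]
    [MonoidHomClass F (FreeGroup (Fin 2)) (FreeGroup (Fin 2))] {ψ : F} {K : ℤ}
    (ha : ψ (of 0) = of 0 * of 1 ^ K) (hb : ψ (of 1) = of 1) (e : Bool) (L : List (Bool × ℤ)) :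
    ψ (mk (blockWord L)) =
      of 1 ^ (-(K * (!nextSign e L).toInt)) * mk (blockWord (shift K e L)) *
        of 1 ^ (K * (!e).toInt) := by
  induction L with
  | nil => simp [blockWord, shift, nextSign, ← one_eq_mk]
  | cons x t ih =>
    obtain ⟨ε, m⟩ := x
    rw [shift, mk_blockWord_cons, mk_blockWord_cons, _root_.map_mul, _root_.map_mul, map_zpow,
      hb, ih, map_mk_singleton_zero ha, nextSign, shiftCoeff]
    group

variable {φ : MulAut (FreeGroup (Fin 2))} {k : ℤ}

theorem zpow_apply_of_zero (hφa : φ (of 0) = of 0 * of 1 ^ k) (hφb : φ (of 1) = of 1) (n : ℤ) :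
    (φ ^ n) (of 0) = of 0 * of 1 ^ (n * k) := by
  induction n using Int.induction_on with
  | zero => simp
  | succ n ih =>
    rw [zpow_add_one, MulAut.mul_apply, hφa, _root_.map_mul, ih, map_zpow,
      MulAut.zpow_apply_eq_self hφb, mul_assoc, ← zpow_add, add_mul, one_mul]
  | pred n ih =>
    have hinv : φ⁻¹ (of 0) = of 0 * of 1 ^ (-k) := by
      rw [MulAut.inv_apply, MulEquiv.symm_apply_eq, _root_.map_mul, map_zpow, hφa, hφb]
      group
    rw [zpow_sub_one, MulAut.mul_apply, hinv, _root_.map_mul, ih, map_zpow,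
      MulAut.zpow_apply_eq_self hφb, mul_assoc, ← zpow_add, sub_mul, one_mul, sub_eq_add_neg]

theorem natAbs_mul_sameSignPairs_le_of_isConj {F : Type*}
    [FunLike F (FreeGroup (Fin 2)) (FreeGroup (Fin 2))]
    [MonoidHomClass F (FreeGroup (Fin 2)) (FreeGroup (Fin 2))] {ψ : F} {K : ℤ}
    (ha : ψ (of 0) = of 0 * of 1 ^ K) (hb : ψ (of 1) = of 1) {e : Bool} {L : List (Bool × ℤ)}
    (he : nextSign e L = e) (hred : BlockReduced e L)
    (hconj : IsConj (ψ (mk (blockWord L))) (mk (blockWord L))) :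
    K.natAbs * sameSignPairs e L ≤ 2 * bsum L := by
  have hψ := map_mk_blockWord ha hb e L
  rw [he] at hψ
  have hshift : IsConj (mk (blockWord (shift K e L))) (mk (blockWord L)) :=
    (isConj_iff.mpr ⟨of 1 ^ (-(K * (!e).toInt)), by rw [hψ]; group⟩).trans hconj
  have hcyc : IsCyclicallyReduced (blockWord (shift K e L)) :=
    (isCyclicallyReduced_blockWord_iff (by rw [nextSign_shift, he])).mpr (hred.shift K)
  have hle := hcyc.letterCount_le_of_isConj (i := 1) hshift
  rw [letterCount_blockWord, letterCount_blockWord] at hle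
  linarith [natAbs_mul_sameSignPairs_le K e L]

theorem sameSignPairs_eq_zero_of_isConj {r : ℤ} (hk : k ≠ 0) (hr : r ≠ 0)
    (hφa : φ (of 0) = of 0 * of 1 ^ k) (hφb : φ (of 1) = of 1) {e : Bool} {L : List (Bool × ℤ)}
    (he : nextSign e L = e) (hred : BlockReduced e L)
    (hconj : IsConj ((φ ^ r) (mk (blockWord L))) (mk (blockWord L))) :
    sameSignPairs e L = 0 := by
  set n : ℕ := 2 * bsum L + 1
  have hpow : IsConj ((φ ^ (r * n)) (mk (blockWord L))) (mk (blockWord L)) := by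
    rw [zpow_mul, zpow_natCast]
    exact hconj.pow_apply n
  have hle := natAbs_mul_sameSignPairs_le_of_isConj (zpow_apply_of_zero hφa hφb _)
    (MulAut.zpow_apply_eq_self hφb _) he hred hpow
  have hK : n ≤ (r * n * k).natAbs := by
    rw [Int.natAbs_mul, Int.natAbs_mul, Int.natAbs_natCast]
    calc n = 1 * n * 1 := by ring
      _ ≤ r.natAbs * n * k.natAbs := by gcongr <;> omega
  by_contra h
  have := (hK.trans (Nat.le_mul_of_pos_right _ (Nat.pos_of_ne_zero h))).trans hle
  omega

theorem exists_fixed_isConj_of_sameSignPairs_eq_zero (hφa : φ (of 0) = of 0 * of 1 ^ k)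
    (hφb : φ (of 1) = of 1) {e : Bool} {L : List (Bool × ℤ)} (he : nextSign e L = e)
    (h : sameSignPairs e L = 0) : ∃ v, φ v = v ∧ IsConj (mk (blockWord L)) v := by
  have hφ := map_mk_blockWord hφa hφb e L
  rw [he, shift_eq_self k h] at hφ
  cases e
  · refine ⟨of 0 * mk (blockWord L) * (of 0)⁻¹, ?_, isConj_iff.mpr ⟨of 0, rfl⟩⟩
    rw [_root_.map_mul, _root_.map_mul, _root_.map_inv, hφa, hφ]
    simp
    group
  · exact ⟨mk (blockWord L), by simpa using hφ, IsConj.refl _⟩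

end Transvection

open FreeGroup Transvection

/-- If `φ` is the automorphism of `F₂ = ⟨a,b⟩` with `aφ = a * b^k`, `bφ = b` (`k ≠ 0`),
`r` is a nonzero integer and `w φ^r` is conjugate to `w` in `F₂`, then `w` is conjugate
in `F₂` to an element fixed by `φ`. -/
theorem stmt19 (k : ℤ) (hk : k ≠ 0) (a b : FreeGroup (Fin 2))
    (ha : a = FreeGroup.of 0) (hb : b = FreeGroup.of 1)
    (φ : MulAut (FreeGroup (Fin 2))) (hφa : φ a = a * b ^ k) (hφb : φ b = b)
    (r : ℤ) (hr : r ≠ 0) (w : FreeGroup (Fin 2)) (hconj : IsConj ((φ ^ r) w) w) :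
    ∃ v : FreeGroup (Fin 2), φ v = v ∧ IsConj w v := by
  subst ha hb
  obtain ⟨l, hl, hwl⟩ := exists_isCyclicallyReduced_isConj w
  rcases bword_or_isConj_blockWord hl with ⟨p, rfl⟩ | ⟨e, L, he, hred, hlL⟩
  · exact ⟨of 1 ^ p, by rw [map_zpow, hφb], by rwa [mk_bword] at hwl⟩
  · have hwL := hwl.trans hlL
    have hL : IsConj ((φ ^ r) (mk (blockWord L))) (mk (blockWord L)) :=
      ((φ ^ r).toMonoidHom.map_isConj hwL).symm.trans (hconj.trans hwL)
    obtain ⟨v, hv, hLv⟩ := exists_fixed_isConj_of_sameSignPairs_eq_zero hφa hφb he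
      (sameSignPairs_eq_zero_of_isConj hk hr hφa hφb he hred hL)
    exact ⟨v, hv, hwL.trans hLv⟩
end
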